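/- arXiv:2005.12915 — 6 statements merged into one kernel-verified Lean document; each statement's English description precedes it below -/
import Mathlib

section
/- For every natural number m ≥ 1, the proportional choice number of the star K_{1,m} equals 1 + ⌈m/2⌉. -/
open Finset SimpleGraph

/-- `L` is a `k`-assignment: every vertex gets a list (finset) of exactly `k` colors. -/
def IsKAssignment {V : Type*} (L : V → Finset ℕ) (k : ℕ) : Prop :=
  ∀ v, (L v).card = k

/-- The multiplicity `η_L(c)`: the number of vertices whose list contains `c`. -/
def mult {V : Type*} [Fintype V] (L : V → Finset ℕ) (c : ℕ) : ℕ :=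
  (Finset.univ.filter (fun v => c ∈ L v)).card

/-- The palette of a list assignment: the union of all the lists. -/
def palette {V : Type*} [Fintype V] (L : V → Finset ℕ) : Finset ℕ :=
  Finset.univ.biUnion L

/-- A proper `L`-coloring: each vertex is colored from its list, and adjacent
vertices get different colors. -/
def IsProperListColoring {V : Type*} (G : SimpleGraph V) (L : V → Finset ℕ)
    (f : V → ℕ) : Prop :=
  (∀ v, f v ∈ L v) ∧ ∀ ⦃u w⦄, G.Adj u w → f u ≠ f w

/-- A proportional `L`-coloring: a proper `L`-coloring such that each color `c` in
the palette is used `⌊η(c)/k⌋` or `⌈η(c)/k⌉` times. -/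
def IsProportionalColoring {V : Type*} [Fintype V] (G : SimpleGraph V)
    (L : V → Finset ℕ) (k : ℕ) (f : V → ℕ) : Prop :=
  IsProperListColoring G L f ∧
    ∀ c ∈ palette L,
      (Finset.univ.filter (fun v => f v = c)).card = mult L c / k ∨
      (Finset.univ.filter (fun v => f v = c)).card = (mult L c + k - 1) / k

/-- `G` is proportionally `k`-choosable. -/
def ProportionallyChoosable {V : Type*} [Fintype V] (G : SimpleGraph V) (k : ℕ) : Prop :=
  ∀ L : V → Finset ℕ, IsKAssignment L k → ∃ f, IsProportionalColoring G L k f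

/-- The proportional choice number `χ_pc(G)`. -/
noncomputable def propChoiceNumber {V : Type*} [Fintype V] (G : SimpleGraph V) : ℕ :=
  sInf {k | ProportionallyChoosable G k}

/-- An equitable `k`-coloring exists: a proper coloring with `k` (possibly empty)
color classes whose sizes pairwise differ by at most one. -/
def EquitablyColorable {V : Type*} [Fintype V] (G : SimpleGraph V) (k : ℕ) : Prop :=
  ∃ f : V → Fin k, (∀ ⦃u w⦄, G.Adj u w → f u ≠ f w) ∧
    ∀ c c' : Fin k,
      (Finset.univ.filter (fun v => f v = c)).card ≤
        (Finset.univ.filter (fun v => f v = c')).card + 1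

/-- The complete bipartite graph `K_{n,m}`. -/
abbrev KBip (n m : ℕ) : SimpleGraph (Fin n ⊕ Fin m) :=
  completeBipartiteGraph (Fin n) (Fin m)

/-!
For the lower bound, give every vertex the list `{0, …, k - 1}` with `2k ≤ m + 1`: the color of
the center is used only once, although its multiplicity `m + 1` is at least `2k`.

For the upper bound, color the center with a color `a` of least multiplicity in its list. All
multiplicities are below `2k`, so it suffices to color the leaves from their lists minus `a`
such that each color `c` is used at most `⌈η(c)/k⌉` times, and at least once if `η(c) ≥ k`.
This is a capacitated matching problem, solved by Hall's theorem; both Hall conditions follow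
by double counting, the one for sets of leaves using the minimality of `a`.
-/

section CapacitatedAssignment

variable {W α : Type*}

def capacitySlots (cap : α → ℕ) (A : Finset α) : Finset (Σ _ : α, ℕ) :=
  A.sigma fun c => range (cap c)

lemma mem_capacitySlots {cap : α → ℕ} {A : Finset α} {p : Σ _ : α, ℕ} :
    p ∈ capacitySlots cap A ↔ p.1 ∈ A ∧ p.2 < cap p.1 := by
  simp [capacitySlots]

lemma card_capacitySlots (cap : α → ℕ) (A : Finset α) :
    #(capacitySlots cap A) = ∑ c ∈ A, cap c := by
  simp [capacitySlots]

variable [Fintype W] [DecidableEq α]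

lemma card_fst_eq_le_of_injective {cap : α → ℕ} {f : W → Σ _ : α, ℕ}
    (hf : Function.Injective f) (hcap : ∀ w, (f w).2 < cap (f w).1) (c : α) :
    #{w | (f w).1 = c} ≤ cap c := by
  calc #{w | (f w).1 = c} ≤ #(range (cap c)) := by
        refine card_le_card_of_injOn (fun w => (f w).2) (fun w hw => ?_) fun w hw w' hw' hww => ?_
        · exact mem_range.2 ((mem_filter.1 hw).2 ▸ hcap w)
        · exact hf (Sigma.ext ((mem_filter.1 hw).2.trans (mem_filter.1 hw').2.symm)
            (heq_of_eq hww))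
    _ = cap c := card_range _

/-- The `d` dummies `inr j` may take any slot except the first slot of a color in `D`, which
is thereby reserved for some `w : W`. -/
def slotChoices (ℓ : W → Finset α) (cap : α → ℕ) (D : Finset α) (d : ℕ) :
    W ⊕ Fin d → Finset (Σ _ : α, ℕ) :=
  Sum.elim (fun w => capacitySlots cap (ℓ w))
    fun _ => {p ∈ capacitySlots cap (univ.biUnion ℓ) | ¬(p.1 ∈ D ∧ p.2 = 0)}

lemma slotChoices_subset (ℓ : W → Finset α) (cap : α → ℕ) (D : Finset α) {d : ℕ}
    (y : W ⊕ Fin d) : slotChoices ℓ cap D d y ⊆ capacitySlots cap (univ.biUnion ℓ) := by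
  rcases y with w | j
  · intro p hp
    rw [slotChoices, Sum.elim_inl, mem_capacitySlots] at hp
    exact mem_capacitySlots.2 ⟨mem_biUnion.2 ⟨w, mem_univ _, hp.1⟩, hp.2⟩
  · exact filter_subset _ _

variable [DecidableEq W]

lemma card_le_card_biUnion_slotChoices {ℓ : W → Finset α} {cap : α → ℕ} {D : Finset α}
    {d : ℕ} (hDcap : ∀ c ∈ D, 0 < cap c)
    (hW : ∀ S : Finset W, #S ≤ ∑ c ∈ S.biUnion ℓ, cap c)
    (hD : ∀ T ⊆ D, #T ≤ #{w | (ℓ w ∩ T).Nonempty})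
    (hd : Fintype.card W + d ≤ #(capacitySlots cap (univ.biUnion ℓ)))
    (s : Finset (W ⊕ Fin d)) : #s ≤ #(s.biUnion (slotChoices ℓ cap D d)) := by
  rw [← card_toLeft_add_card_toRight]
  set S := s.toLeft
  have hS : capacitySlots cap (S.biUnion ℓ) ⊆ s.biUnion (slotChoices ℓ cap D d) := by
    intro p hp
    obtain ⟨⟨w, hw, hpw⟩, hp2⟩ := by simpa only [mem_capacitySlots, mem_biUnion] using hp
    exact mem_biUnion.2 ⟨Sum.inl w, mem_toLeft.1 hw, mem_capacitySlots.2 ⟨hpw, hp2⟩⟩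
  rcases s.toRight.eq_empty_or_nonempty with hR | ⟨j, hj⟩
  · rw [hR, card_empty, add_zero]
    exact (hW S).trans ((card_capacitySlots cap _).symm.le.trans (card_le_card hS))
  -- Once a dummy is in `s`, only the first slots of the colors in `T` can be missed.
  set T := D.filter (· ∉ S.biUnion ℓ)
  have hX : capacitySlots cap (univ.biUnion ℓ) ⊆
      s.biUnion (slotChoices ℓ cap D d) ∪ T.image fun c => ⟨c, 0⟩ := by
    rintro ⟨c, i⟩ hp
    by_cases hdem : c ∈ D ∧ i = 0
    · obtain ⟨hcD, rfl⟩ := hdem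
      by_cases hcS : c ∈ S.biUnion ℓ
      · exact mem_union_left _ (hS (mem_capacitySlots.2 ⟨hcS, hDcap c hcD⟩))
      · exact mem_union_right _ (mem_image.2 ⟨c, mem_filter.2 ⟨hcD, hcS⟩, rfl⟩)
    · exact mem_union_left _ (mem_biUnion.2 ⟨Sum.inr j, mem_toRight.1 hj,
        mem_filter.2 ⟨hp, hdem⟩⟩)
  have hT : #T ≤ #Sᶜ := by
    refine (hD T (filter_subset _ _)).trans (card_le_card fun w hw => ?_)
    obtain ⟨c, hc⟩ := (mem_filter.1 hw).2
    rw [mem_inter] at hc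
    exact mem_compl.2 fun hwS => (mem_filter.1 hc.2).2 (mem_biUnion.2 ⟨w, hwS, hc.1⟩)
  have hX' := (card_le_card hX).trans ((card_union_le _ _).trans
    (add_le_add_right card_image_le _))
  have hR : #s.toRight ≤ d := (card_le_univ _).trans_eq (Fintype.card_fin d)
  rw [card_compl] at hT
  have := card_le_univ S
  omega

theorem exists_capacitated_assignment (ℓ : W → Finset α) (cap : α → ℕ) (D : Finset α)
    (hDcap : ∀ c ∈ D, 0 < cap c) (hW : ∀ S : Finset W, #S ≤ ∑ c ∈ S.biUnion ℓ, cap c)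
    (hD : ∀ T ⊆ D, #T ≤ #{w | (ℓ w ∩ T).Nonempty}) :
    ∃ g : W → α, (∀ w, g w ∈ ℓ w) ∧ (∀ c, #{w | g w = c} ≤ cap c) ∧
      ∀ c ∈ D, ∃ w, g w = c := by
  set X := capacitySlots cap (univ.biUnion ℓ)
  have hWX : Fintype.card W ≤ #X := by
    rw [card_capacitySlots, ← card_univ]
    exact hW univ
  set d := #X - Fintype.card W
  obtain ⟨f, hf, hft⟩ := (all_card_le_biUnion_card_iff_exists_injective _).1
    (card_le_card_biUnion_slotChoices (d := d) hDcap hW hD (Nat.add_sub_of_le hWX).le)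
  have himage : univ.image f = X := by
    refine eq_of_subset_of_card_le (fun p hp => ?_) ?_
    · obtain ⟨y, -, rfl⟩ := mem_image.1 hp
      exact slotChoices_subset ℓ cap D y (hft y)
    · rw [card_image_of_injective _ hf, card_univ, Fintype.card_sum, Fintype.card_fin]
      omega
  have hleaf (w : W) : f (Sum.inl w) ∈ capacitySlots cap (ℓ w) := hft (Sum.inl w)
  refine ⟨fun w => (f (Sum.inl w)).1, fun w => (mem_capacitySlots.1 (hleaf w)).1,
    card_fst_eq_le_of_injective (hf.comp Sum.inl_injective) fun w =>
      (mem_capacitySlots.1 (hleaf w)).2, fun c hc => ?_⟩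
  obtain ⟨w, hw⟩ := card_pos.1 ((card_singleton c).symm.le.trans
    (hD {c} (singleton_subset_iff.2 hc)))
  have hcw : c ∈ ℓ w := by
    obtain ⟨c', hc'⟩ := (mem_filter.1 hw).2
    rw [mem_inter, mem_singleton] at hc'
    exact hc'.2 ▸ hc'.1
  have hcX : (⟨c, 0⟩ : Σ _ : α, ℕ) ∈ X :=
    mem_capacitySlots.2 ⟨mem_biUnion.2 ⟨w, mem_univ _, hcw⟩, hDcap c hc⟩
  rw [← himage] at hcX
  obtain ⟨y | j, -, hy⟩ := mem_image.1 hcX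
  · exact ⟨y, congrArg Sigma.fst hy⟩
  · have := hft (Sum.inr j)
    rw [hy] at this
    exact absurd ⟨hc, rfl⟩ (mem_filter.1 this).2

end CapacitatedAssignment

namespace KBip

open Sum

/-- For `0 < η < 2k` this is `⌈η / k⌉`. -/
def capacity (k η : ℕ) : ℕ := if k < η then 2 else 1

lemma one_le_capacity (k η : ℕ) : 1 ≤ capacity k η := by
  unfold capacity; split_ifs <;> omega

lemma le_mul_capacity {k η : ℕ} (h : η < 2 * k) : η ≤ k * capacity k η := by
  unfold capacity; split_ifs <;> omega

lemma eq_div_or_eq_ceil_div_of_le_capacity {k η n : ℕ} (hη : 0 < η) (hηk : η < 2 * k)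
    (hlow : k ≤ η → 1 ≤ n) (hup : n ≤ capacity k η) :
    n = η / k ∨ n = (η + k - 1) / k := by
  have hk : 0 < k := by omega
  have hfloor : η / k = if k ≤ η then 1 else 0 := by
    split_ifs
    · exact Nat.div_eq_of_lt_le (by omega) (by omega)
    · exact Nat.div_eq_of_lt (by omega)
  have hceil : (η + k - 1) / k = capacity k η := by
    unfold capacity
    split_ifs <;> exact Nat.div_eq_of_lt_le (by omega) (by omega)
  rw [hfloor, hceil]
  unfold capacity at hup ⊢
  split_ifs at hup ⊢ <;> omega

variable {m k : ℕ} {L : Fin 1 ⊕ Fin m → Finset ℕ} {a : ℕ}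

def leafMult (L : Fin 1 ⊕ Fin m → Finset ℕ) (c : ℕ) : ℕ :=
  #{w : Fin m | c ∈ L (inr w)}

lemma mult_eq_ite_add_leafMult (L : Fin 1 ⊕ Fin m → Finset ℕ) (c : ℕ) :
    mult L c = (if c ∈ L (inl 0) then 1 else 0) + leafMult L c := by
  rw [mult, leafMult, card_filter, card_filter, Fintype.sum_sum_type, Fin.sum_univ_one]

lemma mult_le (L : Fin 1 ⊕ Fin m → Finset ℕ) (c : ℕ) : mult L c ≤ m + 1 :=
  (card_filter_le _ _).trans (by simp [add_comm])

lemma sum_leafMult (L : Fin 1 ⊕ Fin m → Finset ℕ) (A : Finset ℕ) :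
    ∑ c ∈ A, leafMult L c = ∑ w, #(L (inr w) ∩ A) := by
  simp only [leafMult, card_filter]
  rw [sum_comm]
  refine sum_congr rfl fun w _ => ?_
  rw [← card_filter, filter_mem_eq_inter, inter_comm]

lemma sum_leafMult_le (hL : IsKAssignment L k) (A : Finset ℕ) :
    ∑ c ∈ A, leafMult L c ≤ m * k := by
  rw [sum_leafMult]
  calc ∑ w, #(L (inr w) ∩ A) ≤ ∑ _w : Fin m, k :=
        sum_le_sum fun w _ => (card_le_card inter_subset_left).trans (hL _).le
    _ = m * k := by simp

lemma card_mul_le_sum_leafMult (hL : IsKAssignment L k) (a : ℕ) (S : Finset (Fin m)) :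
    k * #S ≤ ∑ c ∈ S.biUnion (fun w => (L (inr w)).erase a), leafMult L c
      + #{w ∈ S | a ∈ L (inr w)} := by
  set U := S.biUnion fun w => (L (inr w)).erase a
  have herase (w : Fin m) :
      #(L (inr w)) = #((L (inr w)).erase a) + if a ∈ L (inr w) then 1 else 0 := by
    split_ifs with h
    · exact (card_erase_add_one h).symm
    · rw [erase_eq_of_notMem h, add_zero]
  calc k * #S = ∑ w ∈ S, #(L (inr w)) := by simp [hL _, mul_comm]
    _ = ∑ w ∈ S, #((L (inr w)).erase a) + #{w ∈ S | a ∈ L (inr w)} := by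
        rw [card_filter, ← sum_add_distrib]
        exact sum_congr rfl fun w _ => herase w
    _ ≤ ∑ w, #(L (inr w) ∩ U) + #{w ∈ S | a ∈ L (inr w)} := by
        gcongr
        calc ∑ w ∈ S, #((L (inr w)).erase a) ≤ ∑ w ∈ S, #(L (inr w) ∩ U) :=
              sum_le_sum fun w hw => card_le_card fun c hc =>
                mem_inter.2 ⟨mem_of_mem_erase hc, mem_biUnion.2 ⟨w, hw, hc⟩⟩
          _ ≤ ∑ w, #(L (inr w) ∩ U) := sum_le_sum_of_subset (subset_univ S)
    _ = _ := by rw [sum_leafMult]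

lemma card_le_sum_capacity_of_mult_le (hL : IsKAssignment L k) (hmk : m + 2 ≤ 2 * k)
    (haL : a ∈ L (inl 0)) (ha : mult L a ≤ k) (S : Finset (Fin m)) :
    #S ≤ ∑ c ∈ S.biUnion (fun w => (L (inr w)).erase a), capacity k (mult L c) := by
  have hcount := card_mul_le_sum_leafMult hL a S
  set U := S.biUnion fun w => (L (inr w)).erase a
  have hleaves_a : #{w ∈ S | a ∈ L (inr w)} + 1 ≤ k := by
    have := card_le_card (filter_subset_filter (fun w => a ∈ L (inr w)) (subset_univ S))
    rw [mult_eq_ite_add_leafMult, if_pos haL] at ha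
    simp only [leafMult] at ha
    omega
  have hU : ∑ c ∈ U, leafMult L c ≤ k * ∑ c ∈ U, capacity k (mult L c) := by
    rw [mul_sum]
    refine sum_le_sum fun c _ => ?_
    have := mult_le L c
    have := le_mul_capacity (k := k) (η := mult L c) (by omega)
    have := mult_eq_ite_add_leafMult L c
    split_ifs at this <;> omega
  have : k * #S < k * (∑ c ∈ U, capacity k (mult L c) + 1) := by rw [mul_add]; omega
  exact Nat.lt_succ_iff.1 (Nat.lt_of_mul_lt_mul_left this)

lemma card_le_sum_capacity_of_forall_lt_mult (hL : IsKAssignment L k) (hmk : m + 2 ≤ 2 * k)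
    (hcenter : ∀ b ∈ L (inl 0), k < mult L b) (S : Finset (Fin m)) :
    #S ≤ ∑ c ∈ S.biUnion (fun w => (L (inr w)).erase a), capacity k (mult L c) := by
  set U := S.biUnion fun w => (L (inr w)).erase a
  set Y := L (inl 0) \ U
  -- Double counting the leaf incidences of `U ∪ Y` gives `k (#S + #Y) ≤ (k + 1) m < 2k²`,
  -- whereas a violation of the bound forces `#S + #Y ≥ 2k`.
  by_contra! hlt
  obtain ⟨w₀, hw₀⟩ : S.Nonempty := by rw [← card_pos]; omega
  have hU : k ≤ #U + 1 := by
    have hsub : (L (inr w₀)).erase a ⊆ U := fun c hc => mem_biUnion.2 ⟨w₀, hw₀, hc⟩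
    have := card_le_card hsub
    have := pred_card_le_card_erase (s := L (inr w₀)) (a := a)
    rw [hL] at this
    omega
  have hcap : #U + #(L (inl 0) ∩ U) ≤ ∑ c ∈ U, capacity k (mult L c) := by
    rw [inter_comm, ← filter_mem_eq_inter, card_filter, card_eq_sum_ones, ← sum_add_distrib]
    refine sum_le_sum fun c _ => ?_
    split_ifs with hc
    · simp [capacity, hcenter c hc]
    · exact one_le_capacity _ _
  have hY : #Y + #(L (inl 0) ∩ U) = k := by rw [card_sdiff_add_card_inter, hL]
  have hYmult : k * #Y ≤ ∑ c ∈ Y, leafMult L c := by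
    rw [mul_comm, ← smul_eq_mul]
    refine card_nsmul_le_sum _ _ _ fun c hc => ?_
    have hcL := (mem_sdiff.1 hc).1
    have := hcenter c hcL
    rw [mult_eq_ite_add_leafMult, if_pos hcL] at this
    omega
  have hcount : k * #S ≤ ∑ c ∈ U, leafMult L c + m := by
    have : k * #S ≤ ∑ c ∈ U, leafMult L c + #{w ∈ S | a ∈ L (inr w)} :=
      card_mul_le_sum_leafMult hL a S
    have := (card_filter_le S fun w => a ∈ L (inr w)).trans (card_le_univ S)
    rw [Fintype.card_fin] at this
    omega
  have htotal : ∑ c ∈ U, leafMult L c + ∑ c ∈ Y, leafMult L c ≤ m * k := by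
    rw [← sum_union disjoint_sdiff]
    exact sum_leafMult_le hL _
  have hSY : 2 * k ≤ #S + #Y := by omega
  nlinarith [Nat.mul_le_mul_left k hSY]

lemma card_le_sum_capacity (hL : IsKAssignment L k) (hmk : m + 2 ≤ 2 * k)
    (haL : a ∈ L (inl 0)) (hmin : ∀ b ∈ L (inl 0), mult L a ≤ mult L b)
    (S : Finset (Fin m)) :
    #S ≤ ∑ c ∈ S.biUnion (fun w => (L (inr w)).erase a), capacity k (mult L c) := by
  by_cases ha : k < mult L a
  · exact card_le_sum_capacity_of_forall_lt_mult hL hmk (fun b hb => ha.trans_le (hmin b hb)) S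
  · exact card_le_sum_capacity_of_mult_le hL hmk haL (not_lt.1 ha) S

lemma card_le_card_leaves_meeting (hL : IsKAssignment L k) (haL : a ∈ L (inl 0))
    (T : Finset ℕ) (haT : a ∉ T) (hT : ∀ c ∈ T, k ≤ mult L c) :
    #T ≤ #{w | ((L (inr w)).erase a ∩ T).Nonempty} := by
  set N : Finset (Fin m) := {w | ((L (inr w)).erase a ∩ T).Nonempty}
  have hcenter : #{c ∈ T | c ∈ L (inl 0)} + 1 ≤ k := by
    have hsub : insert a {c ∈ T | c ∈ L (inl 0)} ⊆ L (inl 0) :=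
      insert_subset haL fun c hc => (mem_filter.1 hc).2
    have := card_le_card hsub
    rwa [card_insert_of_notMem fun h => haT (mem_filter.1 h).1, hL] at this
  have hleaves : ∑ c ∈ T, leafMult L c ≤ k * #N := by
    rw [sum_leafMult, ← sum_filter_of_ne (p := fun w => ((L (inr w)).erase a ∩ T).Nonempty)]
    · calc ∑ w ∈ N, #(L (inr w) ∩ T) ≤ ∑ _w ∈ N, k :=
            sum_le_sum fun w _ => (card_le_card inter_subset_left).trans (hL _).le
        _ = k * #N := by rw [sum_const, smul_eq_mul, mul_comm]
    · intro w _ hw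
      rwa [erase_inter, erase_eq_of_notMem fun h => haT (mem_inter.1 h).2, ← card_pos,
        Nat.pos_iff_ne_zero]
  have hsum : k * #T ≤ ∑ c ∈ T, mult L c := by
    rw [mul_comm, ← smul_eq_mul]
    exact card_nsmul_le_sum _ _ _ hT
  rw [sum_congr rfl fun c _ => mult_eq_ite_add_leafMult L c, sum_add_distrib, ← card_filter]
    at hsum
  have : k * #T < k * (#N + 1) := by rw [mul_add]; omega
  exact Nat.lt_succ_iff.1 (Nat.lt_of_mul_lt_mul_left this)

lemma card_filter_elim_eq (a : ℕ) (g : Fin m → ℕ) (c : ℕ) :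
    #{v | Sum.elim (fun _ : Fin 1 => a) g v = c} = (if a = c then 1 else 0) + #{w | g w = c} := by
  rw [card_filter, card_filter, Fintype.sum_sum_type, Fin.sum_univ_one]
  rfl

lemma isProportionalColoring_elim (hmk : m + 2 ≤ 2 * k) (haL : a ∈ L (inl 0))
    {g : Fin m → ℕ} (hgL : ∀ w, g w ∈ (L (inr w)).erase a)
    (hgcap : ∀ c, #{w | g w = c} ≤ capacity k (mult L c))
    (hgD : ∀ c ∈ palette L, c ≠ a → k ≤ mult L c → ∃ w, g w = c) :
    IsProportionalColoring (KBip 1 m) L k (Sum.elim (fun _ => a) g) := by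
  have hga (w : Fin m) : g w ≠ a := ne_of_mem_erase (hgL w)
  refine ⟨⟨?_, ?_⟩, fun c hc => ?_⟩
  · rintro (i | w)
    · rwa [Fin.fin_one_eq_zero i]
    · exact mem_of_mem_erase (hgL w)
  · rintro (i | w) (j | w') hadj <;> simp at hadj
    · exact (hga w').symm
    · exact hga w
  have hpos : 0 < mult L c := by
    obtain ⟨v, -, hv⟩ := mem_biUnion.1 hc
    exact card_pos.2 ⟨v, mem_filter.2 ⟨mem_univ v, hv⟩⟩
  have hlt : mult L c < 2 * k := by have := mult_le L c; omega
  rw [card_filter_elim_eq]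
  refine eq_div_or_eq_ceil_div_of_le_capacity hpos hlt ?_ ?_
  · split_ifs with hac
    · exact fun _ => Nat.le_add_right 1 _
    · intro hkc
      obtain ⟨w, hw⟩ := hgD c hc (Ne.symm hac) hkc
      rw [zero_add]
      exact card_pos.2 ⟨w, by simpa using hw⟩
  · split_ifs with hac
    · subst hac
      simp [hga, one_le_capacity]
    · simpa using hgcap c

theorem proportionallyChoosable_of_add_two_le (hmk : m + 2 ≤ 2 * k) :
    ProportionallyChoosable (KBip 1 m) k := by
  intro L hL
  obtain ⟨a, haL, hmin⟩ :=
    exists_min_image (L (inl 0)) (mult L) (card_pos.1 (by rw [hL]; omega))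
  obtain ⟨g, hgL, hgcap, hgD⟩ := exists_capacitated_assignment (fun w => (L (inr w)).erase a)
    (fun c => capacity k (mult L c)) {c ∈ (palette L).erase a | k ≤ mult L c}
    (fun c _ => one_le_capacity _ _) (card_le_sum_capacity hL hmk haL hmin)
    (fun T hT => card_le_card_leaves_meeting hL haL T
      (fun h => by simpa using hT h) (fun c hc => (mem_filter.1 (hT hc)).2))
  exact ⟨_, isProportionalColoring_elim hmk haL hgL hgcap fun c hc hca hkc =>
    hgD c (mem_filter.2 ⟨mem_erase.2 ⟨hca, hc⟩, hkc⟩)⟩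

theorem not_proportionallyChoosable_of_le (hkm : 2 * k ≤ m + 1) :
    ¬ ProportionallyChoosable (KBip 1 m) k := by
  intro h
  obtain ⟨f, ⟨hfL, hfadj⟩, hfprop⟩ := h (fun _ => range k) fun _ => card_range k
  set c := f (inl 0)
  have hck : c < k := mem_range.1 (hfL (inl 0))
  have hclass : #{v | f v = c} = 1 := by
    refine card_eq_one.2 ⟨inl 0, eq_singleton_iff_unique_mem.2 ⟨by simp [c], ?_⟩⟩
    rintro (i | w) hv
    · rw [Fin.fin_one_eq_zero i]
    · exact absurd (mem_filter.1 hv).2 (hfadj (by simp)).symm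
  have hmult : mult (fun _ : Fin 1 ⊕ Fin m => range k) c = m + 1 := by
    simp [mult, hck, add_comm]
  have hc := hfprop c (mem_biUnion.2 ⟨inl 0, mem_univ _, hfL (inl 0)⟩)
  rw [hclass, hmult] at hc
  have hfloor : 2 ≤ (m + 1) / k := (Nat.le_div_iff_mul_le (by omega)).2 (by omega)
  have hceil : (m + 1) / k ≤ (m + 1 + k - 1) / k := Nat.div_le_div_right (by omega)
  omega

end KBip

theorem stmt2_general (m : ℕ) :
    propChoiceNumber (KBip 1 m) = 1 + (m + 1) / 2 := by
  have hchoosable : ProportionallyChoosable (KBip 1 m) (1 + (m + 1) / 2) :=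
    KBip.proportionallyChoosable_of_add_two_le (by omega)
  refine le_antisymm (Nat.sInf_le hchoosable) (le_csInf ⟨_, hchoosable⟩ fun k hk => ?_)
  by_contra! hlt
  exact KBip.not_proportionallyChoosable_of_le (by omega) hk

/-- For every `m ≥ 1`, `χ_pc(K_{1,m}) = 1 + ⌈m/2⌉`. -/
theorem stmt2 (m : ℕ) (hm : 1 ≤ m) :
    propChoiceNumber (KBip 1 m) = 1 + (m + 1) / 2 :=
  stmt2_general m
end

section
/- If a graph G is proportionally k-choosable, then G is proportionally (k+1)-choosable. -/
/-!
Let `L` be a `(k+1)`-assignment with multiplicities `η(c)`. First pick `g v ∈ L v` for every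
vertex so that each color `c` is picked `d(c) ∈ {⌊η(c)/(k+1)⌋, ⌈η(c)/(k+1)⌉}` times, i.e. a
proportional coloring of the edgeless graph; it exists by Hall's theorem, giving each color
`⌈η(c)/(k+1)⌉` slots of which the first `⌊η(c)/(k+1)⌋` must be filled. Deleting `g v` from each
list leaves a `k`-assignment with multiplicities `η(c) - d(c)`, and a proportional coloring `f` of
`G` for it is an `L`-coloring. Each class of `f` has size a rounding of `(η(c) - d(c))/k`, which is
a rounding of `η(c)/(k+1)` because `d(c)` is one.
-/

open Finset SimpleGraph

def IsRoundedDiv (m a k : ℕ) : Prop :=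
  m = a / k ∨ m = (a + k - 1) / k

theorem isRoundedDiv_iff {m a k : ℕ} (hk : 0 < k) :
    IsRoundedDiv m a k ↔ k * m < a + k ∧ a < k * m + k := by
  simp only [IsRoundedDiv, @eq_comm _ m, Nat.div_eq_iff hk, mul_comm m k]
  omega

theorem isRoundedDiv_of_le_of_le {m a k : ℕ} (hk : 0 < k) (h₁ : a / k ≤ m)
    (h₂ : m ≤ (a + k - 1) / k) : IsRoundedDiv m a k := by
  obtain ⟨-, hfloor⟩ := (isRoundedDiv_iff hk).mp (Or.inl rfl : IsRoundedDiv (a / k) a k)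
  obtain ⟨hceil, -⟩ :=
    (isRoundedDiv_iff hk).mp (Or.inr rfl : IsRoundedDiv ((a + k - 1) / k) a k)
  rw [isRoundedDiv_iff hk]
  constructor <;> nlinarith

theorem isRoundedDiv_zero (k : ℕ) : IsRoundedDiv 0 0 k := Or.inl (Nat.zero_div k).symm

theorem IsRoundedDiv.of_sub {d m a k : ℕ} (hm : IsRoundedDiv m (a - d) k) (hk : 0 < k)
    (hd : IsRoundedDiv d a (k + 1)) : IsRoundedDiv m a (k + 1) := by
  rw [isRoundedDiv_iff hk] at hm
  rw [isRoundedDiv_iff k.succ_pos] at hd ⊢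
  have hda : d ≤ a := by nlinarith
  zify [hda] at hd hm ⊢
  constructor <;> nlinarith

section Quota

variable {V α : Type*} [Fintype V] [DecidableEq α] (L : V → Finset α) (P : Finset α)
  (lo hi : α → ℕ)

/-- The bipartite graph of Hall's theorem: color `c` has the slots `⟨c, i⟩`, `i < hi c`; vertex `v`
may take any slot of a color in `L v`, and each of the `∑ hi - |V|` dummies any slot with
`lo c ≤ i`, so that the slots `i < lo c` can only go to vertices. -/
def quotaSlots : V ⊕ Fin (∑ c ∈ P, hi c - Fintype.card V) → Finset (Σ _ : α, ℕ) :=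
  Sum.elim (fun v => (L v).sigma fun c => range (hi c))
    (fun _ => P.sigma fun c => Ico (lo c) (hi c))

variable {L P lo hi}

theorem card_le_sum_of_card_le_sum_biUnion (hLP : ∀ v, L v ⊆ P)
    (hhi : ∀ A : Finset V, #A ≤ ∑ c ∈ A.biUnion L, hi c) :
    Fintype.card V ≤ ∑ c ∈ P, hi c :=
  (hhi univ).trans (sum_le_sum_of_subset (biUnion_subset.mpr fun v _ => hLP v))

theorem card_le_card_biUnion_quotaSlots (hLP : ∀ v, L v ⊆ P) (hlohi : ∀ c ∈ P, lo c ≤ hi c)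
    (hhi : ∀ A : Finset V, #A ≤ ∑ c ∈ A.biUnion L, hi c)
    (hlo : ∀ A : Finset V, #A + ∑ c ∈ P \ A.biUnion L, lo c ≤ Fintype.card V)
    (s : Finset (V ⊕ Fin (∑ c ∈ P, hi c - Fintype.card V))) :
    #s ≤ #(s.biUnion (quotaSlots L P lo hi)) := by
  set C := s.toLeft.biUnion L
  have hCP : C ⊆ P := biUnion_subset.mpr fun v _ => hLP v
  have hsplit := card_toLeft_add_card_toRight (u := s)
  have hleft : C.sigma (fun c => range (hi c)) ⊆ s.biUnion (quotaSlots L P lo hi) := by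
    intro x hx
    obtain ⟨hxC, hxi⟩ := mem_sigma.mp hx
    obtain ⟨v, hv, hxv⟩ := mem_biUnion.mp hxC
    exact mem_biUnion.mpr ⟨.inl v, mem_toLeft.mp hv, mem_sigma.mpr ⟨hxv, hxi⟩⟩
  have hcardC : #(C.sigma fun c => range (hi c)) = ∑ c ∈ C, hi c := by simp [card_sigma]
  rcases s.toRight.eq_empty_or_nonempty with hempty | ⟨d, hd⟩
  · rw [hempty, card_empty] at hsplit
    have : #s.toLeft ≤ ∑ c ∈ C, hi c := hhi _
    have := card_le_card hleft
    omega
  · have hright : (P \ C).sigma (fun c => Ico (lo c) (hi c)) ⊆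
        s.biUnion (quotaSlots L P lo hi) := by
      intro x hx
      obtain ⟨hxP, hxi⟩ := mem_sigma.mp hx
      exact mem_biUnion.mpr ⟨.inr d, mem_toRight.mp hd, mem_sigma.mpr ⟨(mem_sdiff.mp hxP).1, hxi⟩⟩
    have hdisj : Disjoint (C.sigma fun c => range (hi c))
        ((P \ C).sigma fun c => Ico (lo c) (hi c)) := by
      rw [Finset.disjoint_left]
      intro x hxC hxP
      exact (mem_sdiff.mp (mem_sigma.mp hxP).1).2 (mem_sigma.mp hxC).1
    have hcardP : #((P \ C).sigma fun c => Ico (lo c) (hi c)) =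
        ∑ c ∈ P \ C, hi c - ∑ c ∈ P \ C, lo c := by
      rw [card_sigma, ← sum_tsub_distrib _ fun c hc => hlohi c (mem_sdiff.mp hc).1]
      simp
    have := card_le_card (union_subset hleft hright)
    rw [card_union_of_disjoint hdisj, hcardC, hcardP] at this
    have : #s.toRight ≤ ∑ c ∈ P, hi c - Fintype.card V := by
      simpa using card_le_univ s.toRight
    have := sum_sdiff hCP (f := hi)
    have := card_le_sum_of_card_le_sum_biUnion hLP hhi
    have := sum_le_sum (s := P \ C) fun c hc => hlohi c (mem_sdiff.mp hc).1
    have : #s.toLeft + ∑ c ∈ P \ C, lo c ≤ Fintype.card V := hlo _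
    omega

theorem exists_choice_lo_le_card_fiber_le_hi (hLP : ∀ v, L v ⊆ P)
    (hlohi : ∀ c ∈ P, lo c ≤ hi c) (hhi : ∀ A : Finset V, #A ≤ ∑ c ∈ A.biUnion L, hi c)
    (hlo : ∀ A : Finset V, #A + ∑ c ∈ P \ A.biUnion L, lo c ≤ Fintype.card V) :
    ∃ g : V → α, (∀ v, g v ∈ L v) ∧ ∀ c ∈ P, lo c ≤ #{v | g v = c} ∧ #{v | g v = c} ≤ hi c := by
  obtain ⟨F, hFinj, hFmem⟩ := (all_card_le_biUnion_card_iff_exists_injective _).mp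
    (card_le_card_biUnion_quotaSlots hLP hlohi hhi hlo)
  have hinl (v : V) : F (.inl v) ∈ (L v).sigma fun c => range (hi c) := hFmem (.inl v)
  have hinr (d) : F (.inr d) ∈ P.sigma fun c => Ico (lo c) (hi c) := hFmem (.inr d)
  -- `F` is injective between sets of the same size `∑ c ∈ P, hi c`, so every slot is taken.
  have himage : univ.image F = P.sigma fun c => range (hi c) := by
    refine eq_of_subset_of_card_le (image_subset_iff.mpr fun y _ => ?_) ?_
    · rcases y with v | d
      · exact sigma_mono (hLP v) (fun _ => Subset.rfl) (hinl v)
      · exact sigma_mono Subset.rfl (fun _ _ hx => mem_range.mpr (mem_Ico.mp hx).2) (hinr d)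
    · have := card_le_sum_of_card_le_sum_biUnion hLP hhi
      rw [card_image_of_injective _ hFinj, card_univ, Fintype.card_sum, Fintype.card_fin,
        card_sigma]
      simp only [card_range]
      omega
  set slot : V → Σ _ : α, ℕ := fun v => F (.inl v)
  refine ⟨fun v => (slot v).1, fun v => (mem_sigma.mp (hinl v)).1, fun c hc => ⟨?_, ?_⟩⟩
  · have hsurj : Set.SurjOn (fun v => (slot v).2) ↑({v | (slot v).1 = c} : Finset V)
        ↑(range (lo c)) := by
      intro i hic
      have hslot : (⟨c, i⟩ : Σ _ : α, ℕ) ∈ univ.image F := by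
        rw [himage]
        exact mem_sigma.mpr ⟨hc, mem_range.mpr ((mem_range.mp hic).trans_le (hlohi c hc))⟩
      obtain ⟨v | d, -, hy⟩ := mem_image.mp hslot
      · exact ⟨v, by simp [slot, hy], by simp [slot, hy]⟩
      · have := hinr d
        simp only [hy, mem_sigma, mem_Ico] at this
        simp only [coe_range, Set.mem_Iio] at hic
        omega
    simpa using card_le_card_of_surjOn _ hsurj
  · have hinj : Set.InjOn (fun v => (slot v).2) ↑({v | (slot v).1 = c} : Finset V) := by
      intro v hv w hw hvw
      have hvw₁ := (mem_filter.mp hv).2.trans (mem_filter.mp hw).2.symm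
      exact Sum.inl_injective (hFinj (Sigma.ext hvw₁ (heq_of_eq hvw)))
    have hmaps : Set.MapsTo (fun v => (slot v).2) ↑({v | (slot v).1 = c} : Finset V)
        ↑(range (hi c)) := by
      intro v hv
      have := (mem_sigma.mp (hinl v)).2
      rwa [(mem_filter.mp hv).2] at this
    simpa using card_le_card_of_injOn _ hmaps hinj

end Quota

section Multiplicity
variable {V : Type*} [Fintype V] {L : V → Finset ℕ} {k : ℕ}

theorem sum_mult_eq_sum_card_inter (L : V → Finset ℕ) (C : Finset ℕ) :
    ∑ c ∈ C, mult L c = ∑ v, #(C ∩ L v) := by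
  calc ∑ c ∈ C, mult L c = ∑ c ∈ C, ∑ v, if c ∈ L v then 1 else 0 := by
        simp only [mult, card_filter]
    _ = ∑ v, ∑ c ∈ C, if c ∈ L v then 1 else 0 := sum_comm
    _ = _ := by simp only [← card_filter, filter_mem_eq_inter]

theorem subset_palette (L : V → Finset ℕ) (v : V) : L v ⊆ palette L :=
  subset_biUnion_of_mem L (mem_univ v)

theorem card_mul_le_sum_mult_biUnion (hL : IsKAssignment L k) (A : Finset V) :
    #A * k ≤ ∑ c ∈ A.biUnion L, mult L c :=
  calc #A * k = ∑ v ∈ A, #(A.biUnion L ∩ L v) := by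
        rw [card_eq_sum_ones, sum_mul]
        refine sum_congr rfl fun v hv => ?_
        rw [inter_eq_right.mpr (subset_biUnion_of_mem L hv), hL v, one_mul]
    _ ≤ ∑ v, #(A.biUnion L ∩ L v) := sum_le_sum_of_subset (subset_univ A)
    _ = _ := (sum_mult_eq_sum_card_inter L _).symm

theorem sum_mult_palette (hL : IsKAssignment L k) :
    ∑ c ∈ palette L, mult L c = Fintype.card V * k := by
  rw [sum_mult_eq_sum_card_inter, ← card_univ, card_eq_sum_ones, sum_mul]
  refine sum_congr rfl fun v _ => ?_
  rw [inter_eq_right.mpr (subset_palette L v), hL v, one_mul]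

theorem mult_erase {g : V → ℕ} (hg : ∀ v, g v ∈ L v) (c : ℕ) :
    mult (fun v => (L v).erase (g v)) c = mult L c - #{v | g v = c} := by
  classical
  have hsub : ({v | g v = c} : Finset V) ⊆ ({v | c ∈ L v} : Finset V) := by
    intro v
    simp only [mem_filter, mem_univ, true_and]
    rintro rfl
    exact hg v
  rw [mult, mult, ← card_sdiff_of_subset hsub]
  congr 1
  ext v
  simp only [mem_filter, mem_sdiff, mem_univ, true_and, mem_erase]
  tauto

end Multiplicity

theorem IsProportionalColoring.isRoundedDiv {V : Type*} [Fintype V] {G : SimpleGraph V}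
    {L : V → Finset ℕ} {k : ℕ} {f : V → ℕ} (hf : IsProportionalColoring G L k f) (c : ℕ) :
    IsRoundedDiv #{v | f v = c} (mult L c) k := by
  by_cases hc : c ∈ palette L
  · exact hf.2 c hc
  · have hcL : ∀ v, c ∉ L v := fun v hv => hc (subset_palette L v hv)
    have hfc : ({v | f v = c} : Finset V) = ∅ :=
      filter_eq_empty_iff.mpr fun v _ hv => hcL v (hv ▸ hf.1.1 v)
    have hmult : mult L c = 0 := card_eq_zero.mpr (filter_eq_empty_iff.mpr fun v _ => hcL v)
    rw [hfc, card_empty, hmult]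
    exact isRoundedDiv_zero k

theorem proportionallyChoosable_bot {V : Type*} [Fintype V] {k : ℕ} (hk : 0 < k) :
    ProportionallyChoosable (⊥ : SimpleGraph V) k := by
  intro L hL
  have hceil (a : ℕ) : a ≤ (a + k - 1) / k * k := by
    have := Nat.div_add_mod (a + k - 1) k
    have := Nat.mod_lt (a + k - 1) hk
    rw [mul_comm]
    omega
  have hhi (A : Finset V) : #A ≤ ∑ c ∈ A.biUnion L, (mult L c + k - 1) / k := by
    refine Nat.le_of_mul_le_mul_right ?_ hk
    calc #A * k ≤ ∑ c ∈ A.biUnion L, mult L c := card_mul_le_sum_mult_biUnion hL A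
      _ ≤ _ := by rw [sum_mul]; exact sum_le_sum fun c _ => hceil _
  have hlo (A : Finset V) :
      #A + ∑ c ∈ palette L \ A.biUnion L, mult L c / k ≤ Fintype.card V := by
    have hAP : A.biUnion L ⊆ palette L := biUnion_subset.mpr fun v _ => subset_palette L v
    refine Nat.le_of_mul_le_mul_right ?_ hk
    calc (#A + ∑ c ∈ palette L \ A.biUnion L, mult L c / k) * k
        ≤ ∑ c ∈ A.biUnion L, mult L c + ∑ c ∈ palette L \ A.biUnion L, mult L c := by
          rw [add_mul, sum_mul]
          exact add_le_add (card_mul_le_sum_mult_biUnion hL A)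
            (sum_le_sum fun c _ => Nat.div_mul_le_self _ _)
      _ = Fintype.card V * k := by rw [add_comm, sum_sdiff hAP, sum_mult_palette hL]
  obtain ⟨g, hgL, hg⟩ := exists_choice_lo_le_card_fiber_le_hi (subset_palette L)
    (fun _ _ => Nat.div_le_div_right (by omega)) hhi hlo
  exact ⟨g, ⟨hgL, fun _ _ h => h.elim⟩,
    fun c hc => isRoundedDiv_of_le_of_le hk (hg c hc).1 (hg c hc).2⟩

/-- Proportional `k`-choosability implies proportional `(k+1)`-choosability. -/
theorem stmt3 {V : Type*} [Fintype V] (G : SimpleGraph V) (k : ℕ)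
    (h : ProportionallyChoosable G k) : ProportionallyChoosable G (k + 1) := by
  intro L hL
  obtain ⟨g, ⟨hgL, -⟩, hg⟩ := proportionallyChoosable_bot k.succ_pos L hL
  have hL' : IsKAssignment (fun v => (L v).erase (g v)) k := fun v => by
    simp [card_erase_of_mem (hgL v), hL v]
  obtain ⟨f, hf⟩ := h _ hL'
  refine ⟨f, ⟨fun v => mem_of_mem_erase (hf.1.1 v), hf.1.2⟩, fun c hc => ?_⟩
  obtain ⟨v, -, -⟩ := mem_biUnion.mp hc
  have hk : 0 < k := hL' v ▸ card_pos.mpr ⟨f v, hf.1.1 v⟩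
  have hfc := hf.isRoundedDiv c
  rw [mult_erase hgL] at hfc
  exact hfc.of_sub hk (hg c hc)
end

section
/- If H is a subgraph of G and G is proportionally k-choosable, then H is proportionally k-choosable; consequently χ_pc(H) ≤ χ_pc(G). -/
open Finset SimpleGraph

/-! Restriction: color `G` from the lists of `H` carried over along `φ`, giving every vertex
outside the image a list of fresh colors above the palette of `H`; the coloring of `G` restricts
to a proportional coloring of `H`, because a color of `H` occurs in the lists, and in the color
classes, of the image of `φ` only. For the choice number, every `G` is proportionally
`(|V| + 1)`-choosable: by Hall's theorem lists that long admit an injective coloring, and using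
each color at most once is proportional when `k` exceeds every multiplicity. -/

section Restriction

variable {V W : Type*} [Fintype V] [Fintype W] {φ : W → V}

lemma card_filter_comp_of_injective (hφ : Function.Injective φ) (p : V → Prop)
    [DecidablePred p] (hp : ∀ v, p v → v ∈ Set.range φ) :
    #{w | p (φ w)} = #{v | p v} := by
  rw [← card_map ⟨φ, hφ⟩]
  congr 1
  ext v
  simp only [mem_map, mem_filter, mem_univ, true_and, Function.Embedding.coeFn_mk]
  constructor
  · rintro ⟨w, hw, rfl⟩
    exact hw
  · intro hv
    obtain ⟨w, rfl⟩ := hp v hv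
    exact ⟨w, hv, rfl⟩

lemma palette_comp_subset (L : V → Finset ℕ) : palette (L ∘ φ) ⊆ palette L := by
  intro c hc
  obtain ⟨w, -, hw⟩ := mem_biUnion.mp hc
  exact mem_biUnion.mpr ⟨φ w, mem_univ _, hw⟩

lemma IsProportionalColoring.comp {G : SimpleGraph V} {H : SimpleGraph W}
    (hφ : Function.Injective φ) (hsub : ∀ ⦃u w⦄, H.Adj u w → G.Adj (φ u) (φ w))
    {L : V → Finset ℕ} {k : ℕ} {f : V → ℕ} (hf : IsProportionalColoring G L k f)
    (hfresh : ∀ v ∉ Set.range φ, Disjoint (L v) (palette (L ∘ φ))) :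
    IsProportionalColoring H (L ∘ φ) k (f ∘ φ) := by
  classical
  obtain ⟨⟨hfL, hfG⟩, hcount⟩ := hf
  refine ⟨⟨fun w => hfL (φ w), fun u w h => hfG (hsub h)⟩, fun c hc => ?_⟩
  have only_image : ∀ v, c ∈ L v → v ∈ Set.range φ := fun v hv => by
    by_contra hv'
    exact disjoint_left.mp (hfresh v hv') hv hc
  have hmult : mult (L ∘ φ) c = mult L c :=
    card_filter_comp_of_injective hφ (c ∈ L ·) only_image
  have hclass : #{w | (f ∘ φ) w = c} = #{v | f v = c} :=
    card_filter_comp_of_injective hφ (f · = c) fun v hv => only_image v (hv ▸ hfL v)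
  rw [hmult, hclass]
  exact hcount c (palette_comp_subset L hc)

lemma ProportionallyChoosable.of_injective_hom {G : SimpleGraph V} {H : SimpleGraph W}
    (hφ : Function.Injective φ) (hsub : ∀ ⦃u w⦄, H.Adj u w → G.Adj (φ u) (φ w)) {k : ℕ}
    (hG : ProportionallyChoosable G k) : ProportionallyChoosable H k := by
  intro L hL
  obtain ⟨N, hN⟩ := exists_nat_subset_range (palette L)
  set L' : V → Finset ℕ := Function.extend φ L fun _ => Ico N (N + k) with hL'_def
  have hL'φ : L' ∘ φ = L := Function.extend_comp hφ _ _
  have hL' : IsKAssignment L' k := by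
    intro v
    by_cases hv : ∃ w, φ w = v
    · obtain ⟨w, rfl⟩ := hv
      rw [hL'_def, hφ.extend_apply]
      exact hL w
    · rw [hL'_def, Function.extend_apply' _ _ _ hv, Nat.card_Ico, Nat.add_sub_cancel_left]
  obtain ⟨f, hf⟩ := hG L' hL'
  refine ⟨f ∘ φ, hL'φ ▸ hf.comp hφ hsub fun v hv => ?_⟩
  rw [hL'φ, hL'_def, Function.extend_apply' _ _ _ hv]
  refine disjoint_left.mpr fun c hcN hc => ?_
  exact (mem_range.mp (hN hc)).not_ge (mem_Ico.mp hcN).1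

end Restriction

lemma mult_le_card {V : Type*} [Fintype V] (L : V → Finset ℕ) (c : ℕ) :
    mult L c ≤ Fintype.card V :=
  card_filter_le _ _

lemma mult_pos_of_mem_palette {V : Type*} [Fintype V] {L : V → Finset ℕ} {c : ℕ}
    (hc : c ∈ palette L) : 0 < mult L c := by
  obtain ⟨v, -, hv⟩ := mem_biUnion.mp hc
  exact card_pos.mpr ⟨v, mem_filter.mpr ⟨mem_univ v, hv⟩⟩

lemma IsKAssignment.exists_injective_mem {V : Type*} [Fintype V] {L : V → Finset ℕ}
    {k : ℕ} (hL : IsKAssignment L k) (hk : Fintype.card V ≤ k) :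
    ∃ f : V → ℕ, Function.Injective f ∧ ∀ v, f v ∈ L v := by
  classical
  refine (all_card_le_biUnion_card_iff_exists_injective L).mp fun s => ?_
  rcases s.eq_empty_or_nonempty with rfl | ⟨v, hv⟩
  · simp
  · calc #s ≤ Fintype.card V := card_le_univ s
      _ ≤ #(L v) := (hL v).symm ▸ hk
      _ ≤ #(s.biUnion L) := card_le_card (subset_biUnion_of_mem L hv)

lemma proportionallyChoosable_of_card_lt {V : Type*} [Fintype V] (G : SimpleGraph V) {k : ℕ}
    (hk : Fintype.card V < k) : ProportionallyChoosable G k := by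
  classical
  intro L hL
  obtain ⟨f, hf, hfL⟩ := hL.exists_injective_mem hk.le
  refine ⟨f, ⟨hfL, fun u w h hfe => G.ne_of_adj h (hf hfe)⟩, fun c hc => ?_⟩
  have hmult_pos := mult_pos_of_mem_palette hc
  have hmult_lt : mult L c < k := (mult_le_card L c).trans_lt hk
  have hclass : #{v | f v = c} ≤ 1 := card_le_one.mpr fun a ha b hb =>
    hf ((mem_filter.mp ha).2.trans (mem_filter.mp hb).2.symm)
  rcases Nat.le_one_iff_eq_zero_or_eq_one.mp hclass with h0 | h1
  · exact Or.inl (h0.trans (Nat.div_eq_of_lt hmult_lt).symm)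
  · exact Or.inr (h1.trans (Nat.div_eq_of_lt_le (by omega) (by omega)).symm)

/-- If `H` embeds as a subgraph of `G` (via an injective map preserving
adjacency), then proportional `k`-choosability of `G` implies that of `H`, and
`χ_pc(H) ≤ χ_pc(G)`. -/
theorem stmt4 {V W : Type*} [Fintype V] [Fintype W] (G : SimpleGraph V)
    (H : SimpleGraph W) (φ : W → V) (hφ : Function.Injective φ)
    (hsub : ∀ ⦃u w⦄, H.Adj u w → G.Adj (φ u) (φ w)) :
    (∀ k : ℕ, ProportionallyChoosable G k → ProportionallyChoosable H k) ∧
      propChoiceNumber H ≤ propChoiceNumber G := by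
  have mono : ∀ k, ProportionallyChoosable G k → ProportionallyChoosable H k :=
    fun _ hG => hG.of_injective_hom hφ hsub
  have hG_nonempty : {k | ProportionallyChoosable G k}.Nonempty :=
    ⟨_, proportionallyChoosable_of_card_lt G (Nat.lt_succ_self _)⟩
  exact ⟨mono, Nat.sInf_le (mono _ (Nat.sInf_mem hG_nonempty))⟩
end

section
/- Let G = K_{n_1,…,n_t} be a complete t-partite graph with t ≥ 2 and n_i ≥ 1 for all i, and let s = Σ_{i=1}^t ⌈n_i/2⌉. Then G is not proportionally (s−1)-choosable; consequently χ_pc(K_{n_1,…,n_t}) ≥ Σ_{i=1}^t ⌈n_i/2⌉. -/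
/-!
Give the vertices of a set `U` with `|U| ≤ 2k` the list `{0, …, k-1}` and all other vertices
lists of larger colors. In a proportional coloring each color `c < k` is then used only on `U`,
and at most `⌈|U|/k⌉ ≤ 2` times. In a complete multipartite graph every color class lies in a
single part, so the vertices of `U` in part `i` use at least `⌈|U ∩ Vᵢ|/2⌉` colors of their own,
whence `∑ᵢ ⌈|U ∩ Vᵢ|/2⌉ ≤ k`. If `k < ∑ᵢ ⌈|Vᵢ|/2⌉`, this fails for `U` with `2aᵢ - 1` vertices
in part `i`, where `aᵢ ≤ ⌈|Vᵢ|/2⌉`, `∑ aᵢ = k + 1` and at least two `aᵢ` are positive.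
-/

open Finset SimpleGraph

lemma Finset.exists_le_le_sum_eq {ι : Type*} (s : Finset ι) {l c : ι → ℕ}
    (hlc : l ≤ c) {m : ℕ} (hlm : ∑ i ∈ s, l i ≤ m) (hmc : m ≤ ∑ i ∈ s, c i) :
    ∃ a : ι → ℕ, l ≤ a ∧ a ≤ c ∧ ∑ i ∈ s, a i = m := by
  classical
  induction s using Finset.induction_on generalizing m with
  | empty => exact ⟨l, le_rfl, hlc, by simp at hmc ⊢; omega⟩
  | insert j s hj ih =>
    rw [sum_insert hj] at hlm hmc
    set x := min (c j) (m - ∑ i ∈ s, l i)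
    have hxc : x ≤ c j := min_le_left _ _
    have hxm : x ≤ m - ∑ i ∈ s, l i := min_le_right _ _
    have hlx : l j ≤ x := le_min (hlc j) (by omega)
    have hls : ∑ i ∈ s, l i ≤ ∑ i ∈ s, c i := sum_le_sum fun i _ => hlc i
    obtain ⟨a, hla, hac, ha⟩ := ih (m := m - x) (by omega) (by omega)
    refine ⟨Function.update a j x, fun i => ?_, fun i => ?_, ?_⟩
    · rcases eq_or_ne i j with rfl | hi
      · simpa using hlx
      · simpa [hi] using hla i
    · rcases eq_or_ne i j with rfl | hi
      · simpa using hxc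
      · simpa [hi] using hac i
    · rw [sum_insert hj, Function.update_self, sum_update_of_notMem hj]
      omega

lemma not_proportionallyChoosable_zero {V : Type*} [Fintype V] [Nonempty V]
    (G : SimpleGraph V) : ¬ ProportionallyChoosable G 0 := by
  intro h
  obtain ⟨f, ⟨hfL, -⟩, -⟩ := h (fun _ => ∅) (fun _ => card_empty)
  exact notMem_empty _ (hfL (Classical.arbitrary V))

lemma IsProportionalColoring.card_fiber_le {V : Type*} [Fintype V] {G : SimpleGraph V}
    {L : V → Finset ℕ} {k : ℕ} {f : V → ℕ} (hf : IsProportionalColoring G L k f) {c : ℕ}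
    (hc : c ∈ palette L) : #{v | f v = c} ≤ (mult L c + k - 1) / k := by
  rcases hf.2 c hc with h | h <;> rw [h]
  rcases Nat.eq_zero_or_pos k with rfl | hk
  · simp
  · exact Nat.div_le_div_right (by omega)

lemma ProportionallyChoosable.exists_coloring_card_fiber_le_two {V : Type*} [Fintype V]
    {G : SimpleGraph V} {k : ℕ} (h : ProportionallyChoosable G k) (U : Finset V)
    (hU : #U ≤ 2 * k) :
    ∃ f : V → ℕ, (∀ ⦃u w⦄, G.Adj u w → f u ≠ f w) ∧ (∀ v ∈ U, f v < k) ∧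
      ∀ c, #{v ∈ U | f v = c} ≤ 2 := by
  classical
  set L : V → Finset ℕ := fun v => if v ∈ U then range k else Ico k (2 * k)
  have hL : IsKAssignment L k := fun v => by
    by_cases hv : v ∈ U <;> simp [L, hv]; omega
  obtain ⟨f, hf⟩ := h L hL
  have hlt : ∀ v ∈ U, f v < k := fun v hv => by simpa [L, hv] using hf.1.1 v
  refine ⟨f, hf.1.2, hlt, fun c => ?_⟩
  rcases (U.filter (f · = c)).eq_empty_or_nonempty with hempty | ⟨v, hv⟩
  · simp [hempty]
  obtain ⟨hvU, rfl⟩ := mem_filter.1 hv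
  have hmult : mult L (f v) ≤ 2 * k := by
    refine (card_le_card fun w hw => ?_).trans hU
    by_contra hwU
    have := hlt v hvU
    simp [L, hwU] at hw
    omega
  have hceil : (mult L (f v) + k - 1) / k ≤ 2 := by
    rcases Nat.eq_zero_or_pos k with rfl | hk
    · simp
    · exact Nat.lt_succ_iff.1 (Nat.div_lt_of_lt_mul (by omega))
  calc #{w ∈ U | f w = f v} ≤ #{w | f w = f v} :=
        card_le_card (filter_subset_filter _ U.subset_univ)
    _ ≤ 2 := (hf.card_fiber_le (mem_biUnion.2 ⟨v, mem_univ v, hf.1.1 v⟩)).trans hceil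

section CompleteMultipartite

variable {ι : Type*} [Fintype ι] {V : ι → Type*}

lemma sum_half_card_le_of_coloring (S : ∀ i, Finset (V i)) {k : ℕ} (f : (Σ i, V i) → ℕ)
    (hf : ∀ ⦃u w⦄, (completeMultipartiteGraph V).Adj u w → f u ≠ f w)
    (hlt : ∀ v ∈ univ.sigma S, f v < k) (hfiber : ∀ c, #{v ∈ univ.sigma S | f v = c} ≤ 2) :
    ∑ i, (#(S i) + 1) / 2 ≤ k := by
  classical
  set T : ι → Finset ℕ := fun i => (S i).image fun x => f ⟨i, x⟩
  have hdisj : ((univ : Finset ι) : Set ι).PairwiseDisjoint T := by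
    intro i _ j _ hij
    refine disjoint_left.2 fun c hci hcj => ?_
    obtain ⟨x, -, rfl⟩ := mem_image.1 hci
    obtain ⟨y, -, hxy⟩ := mem_image.1 hcj
    exact hf (by simpa using hij) hxy.symm
  have hhalf : ∀ i, (#(S i) + 1) / 2 ≤ #(T i) := by
    intro i
    have hcard := card_le_mul_card_image (S i) 2 fun c _ =>
      (card_le_card_of_injOn (fun x => (⟨i, x⟩ : Σ i, V i)) (fun x hx => by simpa using hx)
        (fun x _ y _ hxy => by simpa using hxy)).trans (hfiber c)
    simp only [T]
    omega
  calc ∑ i, (#(S i) + 1) / 2 ≤ ∑ i, #(T i) := sum_le_sum fun i _ => hhalf i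
    _ = #(univ.biUnion T) := (card_biUnion hdisj).symm
    _ ≤ #(range k) := card_le_card fun c hc => by
        obtain ⟨i, -, hc⟩ := mem_biUnion.1 hc
        obtain ⟨x, hx, rfl⟩ := mem_image.1 hc
        exact mem_range.2 (hlt _ (mem_sigma.2 ⟨mem_univ i, hx⟩))
    _ = k := card_range k

variable [∀ i, Fintype (V i)]

lemma exists_sum_card_le_lt_sum_half_card {p q : ι} (hpq : p ≠ q) (hp : Nonempty (V p))
    (hq : Nonempty (V q)) {k : ℕ} (hk : 0 < k) (hks : k < ∑ i, (Fintype.card (V i) + 1) / 2) :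
    ∃ S : ∀ i, Finset (V i), ∑ i, #(S i) ≤ 2 * k ∧ k < ∑ i, (#(S i) + 1) / 2 := by
  classical
  set l : ι → ℕ := fun i => if i = p ∨ i = q then 1 else 0
  have hl : ∑ i, l i = 2 := by
    rw [sum_boole, Nat.cast_id, ← card_pair hpq]
    congr 1
    ext i
    simp
  have hlc : l ≤ fun i => (Fintype.card (V i) + 1) / 2 := by
    intro i
    by_cases hi : i = p ∨ i = q
    · have : 0 < Fintype.card (V i) := by rcases hi with rfl | rfl <;> exact Fintype.card_pos
      simp only [l, if_pos hi]
      omega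
    · simp [l, hi]
  obtain ⟨a, hla, hac, ha⟩ := exists_le_le_sum_eq univ hlc (m := k + 1) (by omega) (by omega)
  have hS : ∀ i, ∃ S : Finset (V i), #S = 2 * a i - 1 := fun i => by
    have hai := hac i
    simp only at hai
    exact (exists_subset_card_eq (s := univ) (by rw [card_univ]; omega)).imp fun _ hS => hS.2
  choose S hS using hS
  refine ⟨S, ?_, ?_⟩
  · have hle : ∀ i, #(S i) + l i ≤ 2 * a i := fun i => by
      have hlai := hla i
      rw [hS i]
      by_cases hi : i = p ∨ i = q <;> simp only [l, hi, if_true, if_false] at hlai ⊢ <;> omega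
    have hsum := sum_le_sum fun i (_ : i ∈ univ) => hle i
    rw [sum_add_distrib, hl, ← mul_sum, ha] at hsum
    omega
  · have hhalf : ∀ i, (#(S i) + 1) / 2 = a i := fun i => by rw [hS i]; omega
    simp only [hhalf, ha]
    omega

theorem not_proportionallyChoosable_completeMultipartiteGraph {p q : ι} (hpq : p ≠ q)
    (hp : Nonempty (V p)) (hq : Nonempty (V q)) {k : ℕ}
    (hk : k < ∑ i, (Fintype.card (V i) + 1) / 2) :
    ¬ ProportionallyChoosable (completeMultipartiteGraph V) k := by
  intro hG
  rcases Nat.eq_zero_or_pos k with rfl | hk0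
  · have : Nonempty (Σ i, V i) := ⟨⟨p, hp.some⟩⟩
    exact not_proportionallyChoosable_zero _ hG
  obtain ⟨S, hcard, hlt⟩ := exists_sum_card_le_lt_sum_half_card hpq hp hq hk0 hk
  obtain ⟨f, hf, hfk, hfiber⟩ :=
    hG.exists_coloring_card_fiber_le_two (univ.sigma S) (by rwa [card_sigma])
  exact hlt.not_ge (sum_half_card_le_of_coloring S f hf hfk hfiber)

end CompleteMultipartite

lemma le_propChoiceNumber {V : Type*} [Fintype V] {G : SimpleGraph V} {s : ℕ}
    (h : ∀ k < s, ¬ ProportionallyChoosable G k) : s ≤ propChoiceNumber G :=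
  le_csInf ⟨_, proportionallyChoosable_of_card_lt G (Nat.lt_succ_self _)⟩
    fun k hk => not_lt.1 fun hks => h k hks hk

/-- For a complete `t`-partite graph with `t ≥ 2` and parts of sizes
`n i ≥ 1`, letting `s = ∑ ⌈nᵢ/2⌉`, the graph is not proportionally `(s-1)`-choosable,
so its proportional choice number is at least `s`. -/
theorem stmt8 (t : ℕ) (ht : 2 ≤ t) (n : Fin t → ℕ) (hn : ∀ i, 1 ≤ n i)
    (s : ℕ) (hs : s = ∑ i, (n i + 1) / 2) :
    ¬ ProportionallyChoosable (completeMultipartiteGraph (fun i : Fin t => Fin (n i))) (s - 1) ∧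
      s ≤ propChoiceNumber (completeMultipartiteGraph (fun i : Fin t => Fin (n i))) := by
  have hne : ∀ i, Nonempty (Fin (n i)) := fun i => Fin.pos_iff_nonempty.1 (hn i)
  have hnot : ∀ k < s,
      ¬ ProportionallyChoosable (completeMultipartiteGraph fun i : Fin t => Fin (n i)) k :=
    fun k hk => not_proportionallyChoosable_completeMultipartiteGraph
      (p := ⟨0, by omega⟩) (q := ⟨1, ht⟩) (by simp [Fin.ext_iff]) (hne _) (hne _)
      (by simpa [hs] using hk)
  have hs_pos : 0 < s :=
    hs ▸ sum_pos (fun i _ => by have := hn i; omega) ⟨⟨0, by omega⟩, mem_univ _⟩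
  exact ⟨hnot _ (by omega), le_propChoiceNumber hnot⟩
end

section
/- If G = K_{n_1,…,n_t} with t ≥ 2 where each n_i is odd, and s = Σ_{i=1}^t (n_i+1)/2, then |V(G)| = 2s − t ≤ 2(s−1), and G is not equitably (s−1)-colorable. -/
/-!
Suppose `K_{n_1,…,n_t}` had an equitable coloring with `s - 1` colors. It has `2s - t ≤ 2(s - 1)`
vertices, so no color class can have three vertices: otherwise every class would have at least
two, giving at least `2(s - 1) + 1` vertices. A color class is independent, hence lies inside one
part, so the part of odd size `n_i` needs at least `(n_i + 1) / 2` colors of its own, and these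
color sets are disjoint. That is at least `s` colors in total, one too many.
-/

open Finset SimpleGraph

theorem two_mul_sum_succ_div_two_of_odd {ι : Type*} [Fintype ι] {n : ι → ℕ}
    (hodd : ∀ i, Odd (n i)) :
    2 * ∑ i, (n i + 1) / 2 = ∑ i, n i + Fintype.card ι := by
  rw [mul_sum, Fintype.card_eq_sum_ones, ← sum_add_distrib]
  refine sum_congr rfl fun i _ => ?_
  obtain ⟨m, hm⟩ := hodd i
  omega

theorem card_fiber_le_of_equitable {V α : Type*} [Fintype V] [Fintype α] [DecidableEq α]
    (f : V → α) (hf : ∀ c c', #{v | f v = c} ≤ #{v | f v = c'} + 1) {m : ℕ}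
    (hV : Fintype.card V ≤ m * Fintype.card α) (c : α) : #{v | f v = c} ≤ m := by
  by_contra! hc
  have hlt : m * Fintype.card α < Fintype.card V :=
    calc m * Fintype.card α = ∑ _c' : α, m := by simp [mul_comm]
      _ < ∑ c', #{v | f v = c'} :=
        sum_lt_sum (fun c' _ => by have := hf c c'; omega) ⟨c, mem_univ c, hc⟩
      _ = Fintype.card V := (card_eq_sum_card_fiberwise fun v _ => mem_coe.2 (mem_univ (f v))).symm
  omega

theorem card_le_mul_card_image_comp_of_injective {β γ α : Type*} [Fintype β] [Fintype γ]
    [DecidableEq α] {g : β → γ} (hg : Function.Injective g) (f : γ → α) {m : ℕ}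
    (hf : ∀ c, #{y | f y = c} ≤ m) :
    Fintype.card β ≤ m * #(univ.image fun x => f (g x)) :=
  card_le_mul_card_image univ m fun c _ =>
    card_le_card_of_injOn g (fun _ _ => by simp_all) hg.injOn |>.trans (hf c)

namespace SimpleGraph.completeMultipartiteGraph

variable {ι α : Type*} {V : ι → Type*}

theorem fst_eq_of_apply_eq {f : (Σ i, V i) → α}
    (hf : ∀ ⦃v w⦄, (completeMultipartiteGraph V).Adj v w → f v ≠ f w) {v w : Σ i, V i}
    (h : f v = f w) : v.1 = w.1 := by
  by_contra hne
  exact hf hne h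

theorem sum_card_image_le_of_proper [Fintype ι] [∀ i, Fintype (V i)] [Fintype α]
    [DecidableEq α] {f : (Σ i, V i) → α}
    (hf : ∀ ⦃v w⦄, (completeMultipartiteGraph V).Adj v w → f v ≠ f w) :
    ∑ i, #(univ.image fun x : V i => f ⟨i, x⟩) ≤ Fintype.card α := by
  have hdisj : ((univ : Finset ι) : Set ι).PairwiseDisjoint
      fun i => univ.image fun x : V i => f ⟨i, x⟩ := by
    intro i _ j _ hij
    rw [Function.onFun, Finset.disjoint_left]
    simp only [mem_image, mem_univ, true_and]
    rintro _ ⟨x, rfl⟩ ⟨y, hy⟩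
    exact hij (fst_eq_of_apply_eq hf hy.symm)
  rw [← card_biUnion hdisj]
  exact card_le_univ _

end SimpleGraph.completeMultipartiteGraph

/-- If each part size `n i` is odd, `t ≥ 2`, and `s = ∑ (nᵢ+1)/2`, then
the complete `t`-partite graph has `2s - t ≤ 2(s-1)` vertices and is not equitably
`(s-1)`-colorable. -/
theorem stmt10 (t : ℕ) (ht : 2 ≤ t) (n : Fin t → ℕ) (hodd : ∀ i, Odd (n i))
    (s : ℕ) (hs : s = ∑ i, (n i + 1) / 2) :
    Fintype.card (Σ i : Fin t, Fin (n i)) = 2 * s - t ∧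
      2 * s - t ≤ 2 * (s - 1) ∧
      ¬ EquitablyColorable (completeMultipartiteGraph (fun i : Fin t => Fin (n i))) (s - 1) := by
  have h2s : 2 * s = ∑ i, n i + t := by
    simpa [← hs] using two_mul_sum_succ_div_two_of_odd hodd
  have hcard : Fintype.card (Σ i : Fin t, Fin (n i)) = 2 * s - t := by
    simp only [Fintype.card_sigma, Fintype.card_fin]
    omega
  refine ⟨hcard, by omega, ?_⟩
  rintro ⟨f, hproper, hequit⟩
  have hfiber : ∀ c, #{v | f v = c} ≤ 2 :=
    card_fiber_le_of_equitable f hequit (by rw [hcard, Fintype.card_fin]; omega)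
  have hpart : ∀ i, (n i + 1) / 2 ≤ #(univ.image fun x : Fin (n i) => f ⟨i, x⟩) := by
    intro i
    have := card_le_mul_card_image_comp_of_injective (sigma_mk_injective (i := i)) f hfiber
    rw [Fintype.card_fin] at this
    obtain ⟨m, hm⟩ := hodd i
    omega
  have hcolors : s ≤ s - 1 :=
    calc s = ∑ i, (n i + 1) / 2 := hs
      _ ≤ ∑ i, #(univ.image fun x : Fin (n i) => f ⟨i, x⟩) := sum_le_sum fun i _ => hpart i
      _ ≤ s - 1 := by
        simpa using completeMultipartiteGraph.sum_card_image_le_of_proper hproper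
  omega
end

section
/- Let m, n, d be positive integers with m ≥ 3d and n ≥ 2. Then K_{n,m} is proportionally (m+n−d−1)-choosable; consequently χ_pc(K_{n,m}) ≤ m+n−d−1. -/
open Finset SimpleGraph

/-!
For `|V| < 2k`, a proportional `L`-coloring is the same as a proper choice `g v ∈ L v` in which
every color `c` is used at most twice, twice only if `η(c) > k`, and at least once if `η(c) ≥ k`.
Ignoring properness, such a choice exists by Hall's theorem: every color offers one seat, and a
second one if `η(c) > k`; dummy vertices fill the seats that are allowed to stay empty.

Among these choices take one with the fewest colors used on both sides of the bipartite graph.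
If a color `c` is still used at `a` on one side and at `b` on the other, no recoloring of `a` or
`b`, possibly together with one more vertex, helps. So every color of `L a` is used, and a color
of `L a` other than `c` that is used exactly once on the side of `b` is used there at a vertex
not holding `c`; symmetrically for `b`. Counting these colors against `|L a| = |L b| = k` gives
`2|V| ≥ 3k + 1`, and for `2|V| ≤ 3k + 1` every estimate is tight. Then every list consists of
used colors and every color used once has `η ≤ k`; as `η(c) ≤ |V| < 2k`, summing
`η ≤ k · (number of uses)` over the used colors gives `k|V| < k|V|`.
-/

namespace ProportionalChoice

variable {V : Type*} {L : V → Finset ℕ} {k : ℕ}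

lemma sum_card_filter_mem_eq_sum_card_inter (L : V → Finset ℕ) (W : Finset V) (U : Finset ℕ) :
    ∑ c ∈ U, #{v ∈ W | c ∈ L v} = ∑ v ∈ W, #(L v ∩ U) := by
  have := sum_card_bipartiteAbove_eq_sum_card_bipartiteBelow (s := W) (t := U)
    (r := fun v c => c ∈ L v)
  simp only [bipartiteAbove, bipartiteBelow, filter_mem_eq_inter] at this
  simp only [this.symm, inter_comm]

section Choice

variable [Fintype V] {g : V → ℕ} {c : ℕ} {s t : Finset V}

def holders (L : V → Finset ℕ) (c : ℕ) : Finset V := {v | c ∈ L v}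

@[simp] lemma mem_holders {v : V} : v ∈ holders L c ↔ c ∈ L v := by simp [holders]

def colorClass (g : V → ℕ) (c : ℕ) : Finset V := {v | g v = c}

@[simp] lemma mem_colorClass {v : V} : v ∈ colorClass g c ↔ g v = c := by
  simp [colorClass]

-- For `0 < η(c) < 2k` these are exactly the class sizes between `⌊η(c)/k⌋` and `⌈η(c)/k⌉`.
def IsAdmissibleClass (L : V → Finset ℕ) (k c : ℕ) (s : Finset V) : Prop :=
  #s ≤ 2 ∧ (#s = 2 → k < mult L c) ∧ (k ≤ mult L c → s.Nonempty)

def IsProportionalChoice (L : V → Finset ℕ) (k : ℕ) (g : V → ℕ) : Prop :=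
  (∀ v, g v ∈ L v) ∧ ∀ c, IsAdmissibleClass L k c (colorClass g c)

lemma isAdmissibleClass_of_card_eq_one (h : #s = 1) : IsAdmissibleClass L k c s :=
  ⟨by omega, by omega, fun _ => card_pos.1 (by omega)⟩

lemma isAdmissibleClass_of_card_eq_two (h : #s = 2) (hc : k < mult L c) :
    IsAdmissibleClass L k c s :=
  ⟨by omega, fun _ => hc, fun _ => card_pos.1 (by omega)⟩

lemma IsAdmissibleClass.of_card_eq (h : IsAdmissibleClass L k c s) (hst : #t = #s) :
    IsAdmissibleClass L k c t := by
  obtain ⟨h1, h2, h3⟩ := h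
  exact ⟨hst ▸ h1, fun h => h2 (hst ▸ h), fun h => card_pos.1 (hst ▸ card_pos.2 (h3 h))⟩

lemma IsAdmissibleClass.card_eq_div_or_card_eq_div (h : IsAdmissibleClass L k c s)
    (hpos : 0 < mult L c) (hlt : mult L c < 2 * k) :
    #s = mult L c / k ∨ #s = (mult L c + k - 1) / k := by
  obtain ⟨h2, hbig, hne⟩ := h
  have hk : 0 < k := by omega
  rcases lt_trichotomy (mult L c) k with hm | hm | hm
  · have : #s ≠ 2 := fun h => by have := hbig h; omega
    rcases (by omega : #s = 0 ∨ #s = 1) with h | h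
    · left; rw [h, Nat.div_eq_of_lt hm]
    · right; rw [h, Nat.div_eq_of_lt_le] <;> omega
  · have : #s ≠ 2 := fun h => by have := hbig h; omega
    have := card_pos.2 (hne hm.ge)
    left; rw [hm, Nat.div_self hk]; omega
  · have := card_pos.2 (hne hm.le)
    rcases (by omega : #s = 1 ∨ #s = 2) with h | h
    · left; rw [h, Nat.div_eq_of_lt_le] <;> omega
    · right; rw [h, Nat.div_eq_of_lt_le] <;> omega

lemma IsProportionalChoice.isProportionalColoring (hg : IsProportionalChoice L k g)
    (hV : Fintype.card V < 2 * k) {G : SimpleGraph V} (hG : ∀ ⦃u w⦄, G.Adj u w → g u ≠ g w) :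
    IsProportionalColoring G L k g := by
  refine ⟨⟨hg.1, hG⟩, fun c hc =>
    (hg.2 c).card_eq_div_or_card_eq_div ?_ ((card_le_univ _).trans_lt hV)⟩
  obtain ⟨v, -, hv⟩ := mem_biUnion.1 hc
  exact card_pos.2 ⟨v, by simpa using hv⟩

end Choice

/-! ### Existence of a proportional choice -/

section Existence

variable [Fintype V]

lemma card_le_card_biUnion_add_card_filter (hV : Fintype.card V ≤ 2 * k)
    (hL : ∀ v, k ≤ #(L v)) (W : Finset V) :
    #W ≤ #(W.biUnion L) + #{c ∈ W.biUnion L | k < mult L c} := by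
  set P := W.biUnion L
  set X := {c ∈ P | k < mult L c}
  have hmass : #W * k ≤ #X * #W + #{c ∈ P | ¬ k < mult L c} * k := by
    calc #W * k = ∑ _v ∈ W, k := by rw [sum_const, smul_eq_mul]
      _ ≤ ∑ v ∈ W, #(L v ∩ P) := sum_le_sum fun v hv => by
          rw [inter_eq_left.2 (subset_biUnion_of_mem L hv)]; exact hL v
      _ = ∑ c ∈ X, #{v ∈ W | c ∈ L v} + ∑ c ∈ P with ¬ k < mult L c, #{v ∈ W | c ∈ L v} := by
          rw [← sum_card_filter_mem_eq_sum_card_inter, sum_filter_add_sum_filter_not]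
      _ ≤ #X * #W + #{c ∈ P | ¬ k < mult L c} * k := by
          gcongr
          · simpa using sum_le_card_nsmul X _ #W fun c _ => card_filter_le _ _
          · refine sum_le_card_nsmul _ _ k fun c hc => ?_
            exact (card_le_card (monotone_filter_left _ (subset_univ W))).trans
              (not_lt.1 (mem_filter.1 hc).2)
  have hsplit : #X + #{c ∈ P | ¬ k < mult L c} = #P := card_filter_add_card_filter_not _
  have hW : #W ≤ Fintype.card V := card_le_univ W
  by_contra! hlt
  have hk : 0 < k := by omega
  have h1 := Nat.mul_le_mul_left #X (hW.trans hV)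
  have h2 := Nat.mul_le_mul_right k (show #X + #P + 1 ≤ #W by omega)
  have h3 := congrArg (· * k) hsplit
  simp only [add_mul] at h2 h3
  nlinarith

-- `inl c` is the first seat of color `c`; a second seat `inr c` exists only if `η(c) > k`.
def seats (L : V → Finset ℕ) (k : ℕ) (v : V) : Finset (ℕ ⊕ ℕ) :=
  (L v).disjSum {c ∈ L v | k < mult L c}

lemma card_le_card_biUnion_seats (hV : Fintype.card V ≤ 2 * k)
    (hL : ∀ v, k ≤ #(L v)) (W : Finset V) : #W ≤ #(W.biUnion (seats L k)) := by
  have : W.biUnion (seats L k) = (W.biUnion L).disjSum {c ∈ W.biUnion L | k < mult L c} := by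
    ext (c | c) <;> simp [seats, ← and_assoc, exists_and_right]
  rw [this, card_disjSum]
  exact card_le_card_biUnion_add_card_filter hV hL W

-- All seats except the first seats of colors with `η(c) ≥ k`; only these may stay empty.
def optionalSeats (L : V → Finset ℕ) (k : ℕ) : Finset (ℕ ⊕ ℕ) :=
  univ.biUnion (seats L k) \ {c ∈ palette L | k ≤ mult L c}.map .inl

variable [DecidableEq V]

lemma card_le_card_biUnion_holders (hk : 0 < k) (hL : ∀ v, #(L v) ≤ k)
    {T : Finset ℕ} (hT : ∀ c ∈ T, k ≤ mult L c) : #T ≤ #(T.biUnion (holders L)) := by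
  set H := T.biUnion (holders L)
  have hholders : ∀ c ∈ T, #{v ∈ H | c ∈ L v} = mult L c := fun c hc => by
    congr 1; ext v; simpa [H] using fun hv => ⟨c, hc, hv⟩
  refine Nat.le_of_mul_le_mul_right ?_ hk
  calc #T * k ≤ ∑ c ∈ T, mult L c := by simpa using card_nsmul_le_sum T _ k hT
    _ = ∑ v ∈ H, #(L v ∩ T) := by
      rw [← sum_card_filter_mem_eq_sum_card_inter, sum_congr rfl hholders]
    _ ≤ ∑ _v ∈ H, k := sum_le_sum fun v _ => (card_le_card inter_subset_left).trans (hL v)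
    _ = #H * k := by rw [sum_const, smul_eq_mul]

lemma card_filter_forall_notMem_add_card_le (hk : 0 < k) (hL : ∀ v, #(L v) ≤ k)
    (W : Finset V) :
    #{c ∈ palette L | k ≤ mult L c ∧ ∀ v ∈ W, c ∉ L v} + #W ≤ Fintype.card V := by
  set T := {c ∈ palette L | k ≤ mult L c ∧ ∀ v ∈ W, c ∉ L v}
  have h1 : #T ≤ #(T.biUnion (holders L)) :=
    card_le_card_biUnion_holders hk hL fun c hc => (mem_filter.1 hc).2.1
  have h2 : T.biUnion (holders L) ⊆ univ \ W := fun v hv => by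
    obtain ⟨c, hc, hcv⟩ := mem_biUnion.1 hv
    exact mem_sdiff.2 ⟨mem_univ v, fun hvW => (mem_filter.1 hc).2.2 v hvW (mem_holders.1 hcv)⟩
  have h3 := card_le_card h2
  rw [card_sdiff_of_subset (subset_univ _), card_univ] at h3
  have h4 := card_le_univ W
  omega

lemma card_le_card_biUnion_elim_seats_optionalSeats (hk : 0 < k)
    (hV : Fintype.card V ≤ 2 * k) (hL : IsKAssignment L k) {D : ℕ}
    (hD : Fintype.card V + D ≤ #(univ.biUnion (seats L k))) (s : Finset (V ⊕ Fin D)) :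
    #s ≤ #(s.biUnion (Sum.elim (seats L k) fun _ => optionalSeats L k)) := by
  set t : V ⊕ Fin D → Finset (ℕ ⊕ ℕ) := Sum.elim (seats L k) fun _ => optionalSeats L k
  set W := s.toLeft
  have hleft : W.biUnion (seats L k) ⊆ s.biUnion t := fun y hy => by
    obtain ⟨v, hv, hy⟩ := mem_biUnion.1 hy
    exact mem_biUnion.2 ⟨.inl v, mem_toLeft.1 hv, hy⟩
  rw [← card_toLeft_add_card_toRight]
  rcases s.toRight.eq_empty_or_nonempty with hE | ⟨i, hi⟩
  · rw [hE, card_empty, add_zero]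
    exact (card_le_card_biUnion_seats hV (fun v => (hL v).ge) _).trans (card_le_card hleft)
  have hT := card_filter_forall_notMem_add_card_le hk (fun v => (hL v).le) W
  set T := {c ∈ palette L | k ≤ mult L c ∧ ∀ v ∈ W, c ∉ L v}
  have hcover : univ.biUnion (seats L k) \ T.map .inl ⊆ s.biUnion t := by
    intro y hy
    obtain ⟨hyS, hyT⟩ := mem_sdiff.1 hy
    by_cases hyF : y ∈ {c ∈ palette L | k ≤ mult L c}.map .inl
    · obtain ⟨c, hcF, rfl⟩ := mem_map.1 hyF
      rw [mem_filter] at hcF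
      have : ¬ ∀ v ∈ W, c ∉ L v := fun h => hyT (mem_map_of_mem _ (mem_filter.2 ⟨hcF.1, hcF.2, h⟩))
      push Not at this
      obtain ⟨v, hv, hcv⟩ := this
      exact hleft (mem_biUnion.2 ⟨v, hv, by simp [seats, hcv]⟩)
    · exact mem_biUnion.2 ⟨.inr i, mem_toRight.1 hi, mem_sdiff.2 ⟨hyS, hyF⟩⟩
  have hE : #s.toRight ≤ D := (card_le_univ _).trans_eq (Fintype.card_fin D)
  calc #W + #s.toRight ≤ #(univ.biUnion (seats L k)) - #(T.map .inl) := by rw [card_map]; omega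
    _ ≤ #(univ.biUnion (seats L k) \ T.map .inl) := le_card_sdiff _ _
    _ ≤ #(s.biUnion t) := card_le_card hcover

lemma exists_injective_seats (hk : 0 < k) (hV : Fintype.card V ≤ 2 * k)
    (hL : IsKAssignment L k) :
    ∃ f : V → ℕ ⊕ ℕ, Function.Injective f ∧ (∀ v, f v ∈ seats L k v) ∧
      ∀ c, k ≤ mult L c → ∃ v, f v = .inl c := by
  obtain ⟨D, hD⟩ := Nat.exists_eq_add_of_le
    (by simpa using card_le_card_biUnion_seats hV (fun v => (hL v).ge) univ)
  obtain ⟨f, hf, hft⟩ := (all_card_le_biUnion_card_iff_exists_injective _).1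
    (card_le_card_biUnion_elim_seats_optionalSeats hk hV hL (D := D) hD.ge)
  -- a matching of `V ⊕ Fin D` into all seats is onto, and dummies avoid forced seats
  have hsurj : univ.image f = univ.biUnion (seats L k) := by
    refine eq_of_subset_of_card_le (fun y hy => ?_) ?_
    · obtain ⟨x, -, rfl⟩ := mem_image.1 hy
      rcases x with v | i
      · exact mem_biUnion.2 ⟨v, mem_univ _, hft _⟩
      · exact (mem_sdiff.1 (hft (.inr i))).1
    · rw [card_image_of_injective _ hf, card_univ, Fintype.card_sum, Fintype.card_fin, hD]
  refine ⟨f ∘ .inl, hf.comp Sum.inl_injective, fun v => hft _, fun c hc => ?_⟩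
  obtain ⟨v, hv⟩ : (holders L c).Nonempty := card_pos.1 (hk.trans_le hc)
  have hcL : c ∈ palette L := mem_biUnion.2 ⟨v, mem_univ v, mem_holders.1 hv⟩
  have hcS : .inl c ∈ univ.image f := by
    rw [hsurj]
    exact mem_biUnion.2 ⟨v, mem_univ v, by simpa [seats] using mem_holders.1 hv⟩
  obtain ⟨x, -, hx⟩ := mem_image.1 hcS
  rcases x with v | i
  · exact ⟨v, hx⟩
  · have hi := hft (.inr i)
    rw [hx, Sum.elim_inr, optionalSeats, mem_sdiff] at hi
    exact absurd (mem_map_of_mem _ (mem_filter.2 ⟨hcL, hc⟩)) hi.2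

lemma exists_isProportionalChoice (hk : 0 < k) (hV : Fintype.card V ≤ 2 * k)
    (hL : IsKAssignment L k) : ∃ g, IsProportionalChoice L k g := by
  obtain ⟨f, hf, hfL, hforced⟩ := exists_injective_seats hk hV hL
  set g : V → ℕ := fun v => Sum.elim id id (f v)
  have hseat : ∀ v, f v = .inl (g v) ∨ f v = .inr (g v) := fun v => by
    simp only [g]; rcases f v with c | c <;> simp
  have hmem : ∀ v, g v ∈ L v ∧ (f v = .inr (g v) → k < mult L (g v)) := fun v => by
    have := hfL v
    rcases hseat v with h | h <;> rw [h] at this <;> simp_all [seats]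
  refine ⟨g, fun v => (hmem v).1, fun c => ⟨?_, fun h2 => ?_, fun hc => ?_⟩⟩
  · calc #(colorClass g c) ≤ #({.inl c, .inr c} : Finset (ℕ ⊕ ℕ)) :=
          card_le_card_of_injOn f (fun v hv => by
            rw [mem_coe, mem_colorClass] at hv; subst hv
            rcases hseat v with h | h <;> simp [h]) hf.injOn
      _ ≤ 2 := card_le_two
  · by_contra hlt
    have hinl : ∀ v ∈ colorClass g c, f v ∈ ({.inl c} : Finset (ℕ ⊕ ℕ)) := fun v hv => by
      rw [mem_colorClass] at hv; subst hv
      rcases hseat v with h | h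
      · simp [h]
      · exact absurd ((hmem v).2 h) hlt
    have := card_le_card_of_injOn f hinl hf.injOn
    simp only [card_singleton] at this; omega
  · obtain ⟨v, hv⟩ := hforced c hc
    exact ⟨v, by simp [g, hv]⟩

end Existence

/-! ### Mixed colors -/

section Mixed

variable {p : V → Prop}

def IsMixed (p : V → Prop) (s : Finset V) : Prop := (∃ a ∈ s, p a) ∧ ∃ b ∈ s, ¬ p b

lemma isMixed_not {s : Finset V} : IsMixed (¬ p ·) s ↔ IsMixed p s := by
  simp [IsMixed, and_comm]

lemma not_isMixed_of_card_le_one {s : Finset V} (h : #s ≤ 1) : ¬ IsMixed p s := by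
  rintro ⟨⟨a, ha, hpa⟩, b, hb, hpb⟩
  exact hpb (card_le_one.1 h a ha b hb ▸ hpa)

lemma not_isMixed_of_forall {s : Finset V} (h : ∀ v ∈ s, p v) : ¬ IsMixed p s :=
  fun ⟨_, b, hb, hpb⟩ => hpb (h b hb)

lemma not_isMixed_of_forall_not {s : Finset V} (h : ∀ v ∈ s, ¬ p v) : ¬ IsMixed p s :=
  fun ⟨⟨a, ha, hpa⟩, _⟩ => h a ha hpa

lemma forall_or_forall_not_of_not_isMixed {s : Finset V} (h : ¬ IsMixed p s) :
    (∀ v ∈ s, p v) ∨ ∀ v ∈ s, ¬ p v := by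
  by_contra! hc
  obtain ⟨⟨b, hb, hpb⟩, a, ha, hpa⟩ := hc
  exact h ⟨⟨a, ha, hpa⟩, b, hb, hpb⟩

variable [DecidablePred p]

instance (s : Finset V) : Decidable (IsMixed p s) := inferInstanceAs (Decidable (_ ∧ _))

lemma isMixed_iff_card_pos {s : Finset V} :
    IsMixed p s ↔ 0 < #{v ∈ s | p v} ∧ 0 < #{v ∈ s | ¬ p v} := by
  simp [IsMixed, card_pos, filter_nonempty_iff]

variable [Fintype V] {g g' : V → ℕ} {c : ℕ}

def mixedColors (p : V → Prop) [DecidablePred p] (g : V → ℕ) : Finset ℕ :=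
  {c ∈ univ.image g | IsMixed p (colorClass g c)}

@[simp] lemma mem_mixedColors : c ∈ mixedColors p g ↔ IsMixed p (colorClass g c) := by
  simp only [mixedColors, mem_filter, mem_image, mem_univ, true_and, and_iff_right_iff_imp]
  rintro ⟨⟨a, ha, -⟩, -⟩
  exact ⟨a, mem_colorClass.1 ha⟩

lemma mixedColors_not : mixedColors (¬ p ·) g = mixedColors p g := by
  ext; simp [isMixed_not]

lemma apply_ne_of_mixedColors_eq_empty (h : mixedColors p g = ∅) {u w : V} (hu : p u)
    (hw : ¬ p w) : g u ≠ g w := fun he => by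
  simpa [h] using (mem_mixedColors (p := p) (g := g)).2
    ⟨⟨u, mem_colorClass.2 rfl, hu⟩, w, mem_colorClass.2 he.symm, hw⟩

def colorsUsedNotOnceOn (q : V → Prop) [DecidablePred q] (g : V → ℕ) : Finset ℕ :=
  {χ ∈ univ.image g | #{v ∈ colorClass g χ | q v} ≠ 1}

-- each class meets the two sides in `(1,0), (2,0), (0,1), (0,2)` or, for mixed colors, `(1,1)`
lemma card_colorsUsedNotOnceOn_add_add_two_mul (hg2 : ∀ χ, #(colorClass g χ) ≤ 2) :
    #(colorsUsedNotOnceOn p g) + #(colorsUsedNotOnceOn (¬ p ·) g) + 2 * #(mixedColors p g) =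
      Fintype.card V := by
  rw [← card_univ, card_eq_sum_card_image g univ, colorsUsedNotOnceOn, colorsUsedNotOnceOn,
    mixedColors, card_filter, card_filter, card_filter, mul_sum, ← sum_add_distrib,
    ← sum_add_distrib]
  refine sum_congr rfl fun χ hχ => ?_
  obtain ⟨v, -, rfl⟩ := mem_image.1 hχ
  have hpos : 0 < #(colorClass g (g v)) := card_pos.2 ⟨v, mem_colorClass.2 rfl⟩
  have hsplit : #{w ∈ colorClass g (g v) | p w} + #{w ∈ colorClass g (g v) | ¬ p w} =
    #(colorClass g (g v)) := card_filter_add_card_filter_not _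
  have := hg2 (g v)
  have hmix := isMixed_iff_card_pos (p := p) (s := colorClass g (g v))
  change _ = #(colorClass g (g v))
  by_cases hm : IsMixed p (colorClass g (g v))
  · have := hmix.1 hm
    simp only [hm, if_true]
    split_ifs <;> omega
  · have := mt hmix.2 hm
    simp only [hm, if_false]
    split_ifs <;> omega

lemma exists_card_colorClass_eq_one_lt_mult (hL : IsKAssignment L k)
    (hV : Fintype.card V < 2 * k) (hg2 : ∀ χ, #(colorClass g χ) ≤ 2)
    (hU : ∀ v, L v ⊆ univ.image g) (hc : #(colorClass g c) = 2) :
    ∃ χ, #(colorClass g χ) = 1 ∧ k < mult L χ := by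
  by_contra! hsmall
  have hmass : ∑ χ ∈ univ.image g, mult L χ = Fintype.card V * k := by
    rw [show ∑ χ ∈ univ.image g, mult L χ = ∑ χ ∈ univ.image g, #{v ∈ univ | χ ∈ L v} from rfl,
      sum_card_filter_mem_eq_sum_card_inter]
    simp [inter_eq_left.2 (hU _), hL _]
  have hcount : ∑ χ ∈ univ.image g, #(colorClass g χ) = Fintype.card V :=
    (card_eq_sum_card_image g univ).symm
  have hcU : c ∈ univ.image g := by
    obtain ⟨v, hv⟩ := card_pos.1 (show 0 < #(colorClass g c) by omega)
    exact mem_image.2 ⟨v, mem_univ v, mem_colorClass.1 hv⟩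
  have hmult : ∀ χ, mult L χ ≤ Fintype.card V := fun χ => card_le_univ _
  have hlt : ∑ χ ∈ univ.image g, mult L χ < ∑ χ ∈ univ.image g, k * #(colorClass g χ) := by
    refine sum_lt_sum (fun χ hχ => ?_) ⟨c, hcU, by rw [hc]; linarith [hmult c]⟩
    obtain ⟨v, -, rfl⟩ := mem_image.1 hχ
    have hpos : 0 < #(colorClass g (g v)) := card_pos.2 ⟨v, mem_colorClass.2 rfl⟩
    rcases (by have := hg2 (g v); omega : #(colorClass g (g v)) = 1 ∨ #(colorClass g (g v)) = 2)
      with h1 | h2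
    · rw [h1, mul_one]; exact hsmall _ h1
    · rw [h2]; linarith [hmult (g v)]
  rw [← mul_sum, hcount, hmass, mul_comm] at hlt
  exact lt_irrefl _ hlt

lemma colorClass_eq_of_forall_ne {S : Finset ℕ} (hS : ∀ v, g' v ≠ g v → g v ∈ S ∧ g' v ∈ S)
    {ψ : ℕ} (hψ : ψ ∉ S) : colorClass g' ψ = colorClass g ψ := by
  ext v
  simp only [mem_colorClass]
  by_cases h : g' v = g v
  · rw [h]
  · obtain ⟨h1, h2⟩ := hS v h
    constructor <;> rintro rfl <;> contradiction

lemma IsProportionalChoice.recolor (hg : IsProportionalChoice L k g) (hL' : ∀ v, g' v ∈ L v)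
    {S : Finset ℕ} (hS : ∀ v, g' v ≠ g v → g v ∈ S ∧ g' v ∈ S)
    (hfit : ∀ ψ ∈ S, IsAdmissibleClass L k ψ (colorClass g' ψ) ∧ ¬ IsMixed p (colorClass g' ψ))
    (hcS : c ∈ S) (hc : c ∈ mixedColors p g) :
    IsProportionalChoice L k g' ∧ #(mixedColors p g') < #(mixedColors p g) := by
  refine ⟨⟨hL', fun ψ => ?_⟩, card_lt_card ?_⟩
  · by_cases hψ : ψ ∈ S
    · exact (hfit ψ hψ).1
    · rw [colorClass_eq_of_forall_ne hS hψ]; exact hg.2 ψ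
  refine (ssubset_iff_of_subset fun ψ hψ => ?_).2
    ⟨c, hc, fun h => (hfit c hcS).2 (mem_mixedColors.1 h)⟩
  by_cases hψS : ψ ∈ S
  · exact absurd (mem_mixedColors.1 hψ) (hfit ψ hψS).2
  · rw [mem_mixedColors, ← colorClass_eq_of_forall_ne hS hψS]; exact mem_mixedColors.1 hψ

variable [DecidableEq V]

lemma colorClass_update (g : V → ℕ) (w : V) (χ ψ : ℕ) :
    colorClass (Function.update g w χ) ψ =
      if χ = ψ then insert w (colorClass g ψ) else (colorClass g ψ).erase w := by
  ext v
  rw [mem_colorClass, Function.update_apply]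
  split_ifs <;> grind [mem_colorClass]

lemma colorClass_update_update_self (g : V → ℕ) {u : V} (w : V) {α : ℕ} (hα : α ≠ g u) :
    colorClass (Function.update (Function.update g u α) w (g u)) (g u) =
      insert w ((colorClass g (g u)).erase u) := by
  rw [colorClass_update, if_pos rfl, colorClass_update, if_neg hα]

end Mixed

/-! ### A minimal choice with a mixed color -/

section Stuck

variable [Fintype V] [DecidableEq V] {g : V → ℕ} {c : ℕ} {p : V → Prop} [DecidablePred p]

structure IsStuck (p : V → Prop) [DecidablePred p] (L : V → Finset ℕ) (k : ℕ) (g : V → ℕ)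
    (c : ℕ) (a b : V) : Prop where
  isProportionalChoice : IsProportionalChoice L k g
  minimal : ∀ g', IsProportionalChoice L k g' → #(mixedColors p g) ≤ #(mixedColors p g')
  colorClass_eq : colorClass g c = {a, b}
  left : p a
  right : ¬ p b

namespace IsStuck

variable {a b : V}

lemma symm (h : IsStuck p L k g c a b) : IsStuck (¬ p ·) L k g c b a where
  isProportionalChoice := h.isProportionalChoice
  minimal g' hg' := by simpa only [mixedColors_not] using h.minimal g' hg'
  colorClass_eq := by rw [h.colorClass_eq, pair_comm]
  left := h.right
  right := not_not.2 h.left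

lemma ne (h : IsStuck p L k g c a b) : a ≠ b := fun hab => h.right (hab ▸ h.left)

lemma apply_eq_iff (h : IsStuck p L k g c a b) {v : V} : g v = c ↔ v = a ∨ v = b := by
  rw [← mem_colorClass, h.colorClass_eq, mem_insert, mem_singleton]

lemma card_colorClass (h : IsStuck p L k g c a b) : #(colorClass g c) = 2 := by
  rw [h.colorClass_eq, card_pair h.ne]

lemma mem_mixedColors (h : IsStuck p L k g c a b) : c ∈ mixedColors p g := by
  rw [ProportionalChoice.mem_mixedColors, h.colorClass_eq]
  exact ⟨⟨a, by simp, h.left⟩, b, by simp, h.right⟩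

lemma mem_list_left (h : IsStuck p L k g c a b) : c ∈ L a :=
  h.apply_eq_iff.2 (Or.inl rfl) ▸ h.isProportionalChoice.1 a

lemma false_of_recolor (h : IsStuck p L k g c a b) {g' : V → ℕ} (hL' : ∀ v, g' v ∈ L v)
    {S : Finset ℕ} (hS : ∀ v, g' v ≠ g v → g v ∈ S ∧ g' v ∈ S)
    (hfit : ∀ ψ ∈ S, IsAdmissibleClass L k ψ (colorClass g' ψ) ∧ ¬ IsMixed p (colorClass g' ψ))
    (hcS : c ∈ S) : False := by
  obtain ⟨hg', hlt⟩ := h.isProportionalChoice.recolor hL' hS hfit hcS h.mem_mixedColors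
  exact (h.minimal g' hg').not_gt hlt

lemma false_of_recolor_endpoint (h : IsStuck p L k g c a b) {w : V} (hw : w = a ∨ w = b)
    {χ : ℕ} (hχ : χ ∈ L w) (hχc : χ ≠ c)
    (hfit : IsAdmissibleClass L k χ (insert w (colorClass g χ)))
    (hmix : ¬ IsMixed p (insert w (colorClass g χ))) : False := by
  have hgw : g w = c := h.apply_eq_iff.2 hw
  refine h.false_of_recolor (g' := Function.update g w χ) (S := {c, χ}) (fun v => ?_)
    (fun v hv => ?_) (fun ψ hψ => ?_) (mem_insert_self _ _)
  · rcases eq_or_ne v w with rfl | hv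
    · simpa using hχ
    · simpa [hv] using h.isProportionalChoice.1 v
  · rcases eq_or_ne v w with rfl | hvw
    · simp [hgw]
    · simp [hvw] at hv
  rcases mem_insert.1 hψ with rfl | hψ
  · have hcard : #(colorClass (Function.update g w χ) ψ) = 1 := by
      rw [colorClass_update, if_neg hχc, card_erase_of_mem (mem_colorClass.2 hgw),
        h.card_colorClass]
    exact ⟨isAdmissibleClass_of_card_eq_one hcard, not_isMixed_of_card_le_one hcard.le⟩
  · rw [mem_singleton] at hψ
    rw [hψ, colorClass_update, if_pos rfl]
    exact ⟨hfit, hmix⟩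

lemma list_subset_image (h : IsStuck p L k g c a b) {w : V} (hw : w = a ∨ w = b) :
    L w ⊆ univ.image g := by
  intro χ hχ
  by_contra hχU
  have hempty : colorClass g χ = ∅ := eq_empty_of_forall_notMem fun v hv =>
    hχU (mem_image.2 ⟨v, mem_univ v, mem_colorClass.1 hv⟩)
  have hχc : χ ≠ c := by
    rintro rfl
    have := h.card_colorClass
    simp [hempty] at this
  have hcard : #(insert w (colorClass g χ)) = 1 := by rw [hempty, insert_empty, card_singleton]
  exact h.false_of_recolor_endpoint hw hχ hχc (isAdmissibleClass_of_card_eq_one hcard)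
    (not_isMixed_of_card_le_one hcard.le)

lemma mult_le_of_colorClass_eq_singleton (h : IsStuck p L k g c a b) {χ : ℕ}
    (hχ : χ ∈ (L a).erase c) {u : V} (hu : colorClass g χ = {u}) (hpu : p u) : mult L χ ≤ k := by
  obtain ⟨hχc, hχa⟩ := mem_erase.1 hχ
  have hau : a ≠ u := by
    rintro rfl
    have : g a = χ := mem_colorClass.1 (hu ▸ mem_singleton_self a)
    exact hχc (this ▸ h.apply_eq_iff.2 (Or.inl rfl))
  by_contra! hlt
  refine h.false_of_recolor_endpoint (Or.inl rfl) hχa hχc ?_ ?_ <;> rw [hu]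
  · exact isAdmissibleClass_of_card_eq_two (card_pair hau) hlt
  · exact not_isMixed_of_forall (by simp [h.left, hpu])

lemma false_of_exchange (h : IsStuck p L k g c a b) {u : V} (hu : g u ∈ (L a).erase c)
    (hside : ∀ v ∈ colorClass g (g u), v ≠ u → p v) {α : ℕ} (hα : α ∈ L u) (hαu : α ≠ g u)
    (hfit : ∀ ψ ∈ ({c, α} : Finset ℕ),
      IsAdmissibleClass L k ψ (colorClass (Function.update (Function.update g u α) a (g u)) ψ) ∧
        ¬ IsMixed p (colorClass (Function.update (Function.update g u α) a (g u)) ψ)) :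
    False := by
  obtain ⟨hβc, hβa⟩ := mem_erase.1 hu
  have hga : g a = c := h.apply_eq_iff.2 (Or.inl rfl)
  have hua : u ≠ a := fun e => hβc (e ▸ hga)
  refine h.false_of_recolor (g' := Function.update (Function.update g u α) a (g u))
    (S := {c, α, g u}) (fun v => ?_) (fun v hv => ?_) (fun ψ hψ => ?_)
    (mem_insert_self _ _)
  · rcases eq_or_ne v a with rfl | hva
    · simpa using hβa
    rcases eq_or_ne v u with rfl | hvu
    · simpa [hva] using hα
    · simpa [hva, hvu] using h.isProportionalChoice.1 v
  · rcases eq_or_ne v a with rfl | hva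
    · simp [hga]
    rcases eq_or_ne v u with rfl | hvu
    · simp [hva]
    · simp [hva, hvu] at hv
  rcases mem_insert.1 hψ with rfl | hψ
  · exact hfit _ (mem_insert_self _ _)
  rcases mem_insert.1 hψ with rfl | hψ
  · exact hfit _ (mem_insert_of_mem (mem_singleton_self _))
  rw [mem_singleton] at hψ
  subst hψ
  have hau : a ∉ (colorClass g (g u)).erase u := fun ha =>
    hβc (hga ▸ (mem_colorClass.1 (mem_of_mem_erase ha)).symm)
  rw [colorClass_update_update_self g a hαu]
  refine ⟨(h.isProportionalChoice.2 (g u)).of_card_eq ?_, not_isMixed_of_forall fun v hv => ?_⟩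
  · rw [card_insert_of_notMem hau, card_erase_add_one (mem_colorClass.2 rfl)]
  · rcases mem_insert.1 hv with rfl | hv
    · exact h.left
    · exact hside v (mem_of_mem_erase hv) (ne_of_mem_erase hv)

lemma notMem_list_of_exchange (h : IsStuck p L k g c a b) {u : V} (hu : g u ∈ (L a).erase c)
    (hpu : ¬ p u) (hside : ∀ v ∈ colorClass g (g u), v ≠ u → p v) : c ∉ L u := by
  intro hcu
  have hβc : g u ≠ c := (mem_erase.1 hu).1
  have hua : u ≠ a := fun e => hpu (e ▸ h.left)
  have hub : u ≠ b := fun e => hβc (h.apply_eq_iff.2 (Or.inr e))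
  refine h.false_of_exchange hu hside hcu hβc.symm fun ψ hψ => ?_
  obtain rfl : ψ = c := by simpa using hψ
  have hclass : colorClass (Function.update (Function.update g u ψ) a (g u)) ψ = {u, b} := by
    ext v
    rcases eq_or_ne v a with rfl | hva
    · simp [hβc, hua.symm, h.ne]
    rcases eq_or_ne v u with rfl | hvu
    · simp [hva]
    · simp [hva, hvu, h.apply_eq_iff]
  rw [hclass]
  exact ⟨isAdmissibleClass_of_card_eq_two (card_pair hub) ((h.isProportionalChoice.2 ψ).2.1
    h.card_colorClass), not_isMixed_of_forall_not (by simp [hpu, h.right])⟩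

lemma list_subset_image_of_exchange (h : IsStuck p L k g c a b) {u : V}
    (hu : g u ∈ (L a).erase c) (hside : ∀ v ∈ colorClass g (g u), p v) :
    L u ⊆ univ.image g := by
  intro α hα
  by_contra hαU
  have hβc : g u ≠ c := (mem_erase.1 hu).1
  have hua : u ≠ a := fun e => hβc (h.apply_eq_iff.2 (Or.inl e))
  have hαv : ∀ v, g v ≠ α := fun v e => hαU (mem_image.2 ⟨v, mem_univ v, e⟩)
  have hαc : α ≠ c := fun e => hαv a (e ▸ h.apply_eq_iff.2 (Or.inl rfl))
  refine h.false_of_exchange hu (fun v hv _ => hside v hv) hα (hαv u).symm fun ψ hψ => ?_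
  have hub : u ≠ b := fun e => hβc (h.apply_eq_iff.2 (Or.inr e))
  have hclass : colorClass (Function.update (Function.update g u α) a (g u)) ψ =
      {if ψ = c then b else u} := by
    rcases mem_insert.1 hψ with rfl | hψ
    · ext v
      rcases eq_or_ne v a with rfl | hva
      · simp [hβc, h.ne]
      rcases eq_or_ne v u with rfl | hvu
      · simp [hva, hαc, hub]
      · simp [hva, hvu, h.apply_eq_iff]
    · obtain rfl : ψ = α := mem_singleton.1 hψ
      ext v
      rcases eq_or_ne v a with rfl | hva
      · simp [hαc, hαv u, hua.symm]
      rcases eq_or_ne v u with rfl | hvu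
      · simp [hva, hαc]
      · simp [hva, hvu, hαv v, hαc]
  have hcard : #(colorClass (Function.update (Function.update g u α) a (g u)) ψ) = 1 := by
    rw [hclass, card_singleton]
  exact ⟨isAdmissibleClass_of_card_eq_one hcard, not_isMixed_of_card_le_one hcard.le⟩

lemma card_filter_add_card_filter_le (h : IsStuck p L k g c a b) :
    #{χ ∈ (L a).erase c | #{v ∈ colorClass g χ | ¬ p v} = 1} + #{v ∈ holders L c | ¬ p v} ≤
      #{v | ¬ p v} := by
  set T := {χ ∈ (L a).erase c | #{v ∈ colorClass g χ | ¬ p v} = 1}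
  set Y : Finset V := {v | ¬ p v ∧ g v ∈ T}
  have hTY : T ⊆ Y.image g := fun χ hχ => by
    obtain ⟨u, hu⟩ := card_pos.1 (show 0 < #{v ∈ colorClass g χ | ¬ p v} by
      rw [(mem_filter.1 hχ).2]; norm_num)
    obtain ⟨hu, hpu⟩ := mem_filter.1 hu
    exact mem_image.2 ⟨u, by simp [Y, hpu, mem_colorClass.1 hu ▸ hχ], mem_colorClass.1 hu⟩
  -- if the only `¬ p`-vertex `u` of such a color held `c`, then `a` and `u` could swap colors
  have hdisj : Disjoint Y {v ∈ holders L c | ¬ p v} := disjoint_left.2 fun u hu hcu => by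
    obtain ⟨hpu, hT⟩ := (mem_filter.1 hu).2
    obtain ⟨hu, hone⟩ := mem_filter.1 hT
    refine h.notMem_list_of_exchange hu hpu (fun v hv hvu => ?_)
      (mem_holders.1 (mem_filter.1 hcu).1)
    by_contra hpv
    have := card_le_one.1 hone.le v (by simp [hv, hpv]) u (by simp [hpu])
    exact hvu this
  calc #T + #{v ∈ holders L c | ¬ p v} ≤ #Y + #{v ∈ holders L c | ¬ p v} :=
        Nat.add_le_add_right ((card_le_card hTY).trans card_image_le) _
    _ = #(Y ∪ {v ∈ holders L c | ¬ p v}) := (card_union_of_disjoint hdisj).symm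
    _ ≤ #{v | ¬ p v} := card_le_card (union_subset (fun v hv => by simp_all [Y])
        fun v hv => by simp_all)

lemma subset_image_and_mult_le_of_forall (h : IsStuck p L k g c a b)
    (hUa : colorsUsedNotOnceOn (¬ p ·) g ⊆ (L a).erase c) {β : ℕ} (hβ : β ∈ univ.image g)
    (hside : ∀ v ∈ colorClass g β, p v) :
    (∀ u ∈ colorClass g β, L u ⊆ univ.image g) ∧ ∀ u, colorClass g β = {u} → mult L β ≤ k := by
  have hβa : β ∈ (L a).erase c := hUa (mem_filter.2 ⟨hβ, by
    rw [filter_false_of_mem fun v hv => not_not.2 (hside v hv), card_empty]; norm_num⟩)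
  refine ⟨fun u hu => ?_, fun u hu => ?_⟩
  · obtain rfl := mem_colorClass.1 hu
    exact h.list_subset_image_of_exchange hβa hside
  · exact h.mult_le_of_colorClass_eq_singleton hβa hu (hside u (hu ▸ mem_singleton_self u))

lemma false_of_tight (h : IsStuck p L k g c a b) (hL : IsKAssignment L k)
    (hV : Fintype.card V < 2 * k) (hmixed : mixedColors p g = {c})
    (hUa : colorsUsedNotOnceOn (¬ p ·) g ⊆ (L a).erase c)
    (hUb : colorsUsedNotOnceOn p g ⊆ (L b).erase c) : False := by
  have hside : ∀ β ∈ univ.image g, β ≠ c →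
      (∀ v ∈ colorClass g β, p v) ∨ ∀ v ∈ colorClass g β, ¬ p v := fun β _ hβc =>
    forall_or_forall_not_of_not_isMixed fun hm => hβc (by
      simpa [hmixed] using (ProportionalChoice.mem_mixedColors (p := p) (g := g)).2 hm)
  have hclosedB := fun β hβ hs =>
    h.symm.subset_image_and_mult_le_of_forall (by simpa using hUb) (β := β) hβ hs
  have hU : ∀ v, L v ⊆ univ.image g := fun v => by
    have hvU : g v ∈ univ.image g := mem_image_of_mem g (mem_univ v)
    by_cases hvc : g v = c
    · exact h.list_subset_image (h.apply_eq_iff.1 hvc)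
    rcases hside (g v) hvU hvc with hs | hs
    · exact (h.subset_image_and_mult_le_of_forall hUa hvU hs).1 v (mem_colorClass.2 rfl)
    · exact (hclosedB (g v) hvU hs).1 v (mem_colorClass.2 rfl)
  obtain ⟨χ, hχ1, hχk⟩ := exists_card_colorClass_eq_one_lt_mult hL hV
    (fun χ => (h.isProportionalChoice.2 χ).1) hU h.card_colorClass
  obtain ⟨u, hu⟩ := card_eq_one.1 hχ1
  have hχU : χ ∈ univ.image g :=
    mem_image.2 ⟨u, mem_univ u, mem_colorClass.1 (hu ▸ mem_singleton_self u)⟩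
  have hχc : χ ≠ c := by
    rintro rfl
    have := h.card_colorClass
    omega
  rcases hside χ hχU hχc with hs | hs
  · exact hχk.not_ge ((h.subset_image_and_mult_le_of_forall hUa hχU hs).2 u hu)
  · exact hχk.not_ge ((hclosedB χ hχU hs).2 u hu)

theorem false (h : IsStuck p L k g c a b) (hL : IsKAssignment L k) (hk : 2 ≤ k)
    (hN : 2 * Fintype.card V ≤ 3 * k + 1) : False := by
  have hA := h.card_filter_add_card_filter_le
  have hB := h.symm.card_filter_add_card_filter_le
  simp only [not_not] at hB
  have hTa : #((L a).erase c) + 1 = k := by rw [card_erase_add_one h.mem_list_left, hL a]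
  have hTb : #((L b).erase c) + 1 = k := by rw [card_erase_add_one h.symm.mem_list_left, hL b]
  have hsplitA := card_filter_add_card_filter_not (s := (L a).erase c)
    (fun χ => #{v ∈ colorClass g χ | ¬ p v} = 1)
  have hsplitB := card_filter_add_card_filter_not (s := (L b).erase c)
    (fun χ => #{v ∈ colorClass g χ | p v} = 1)
  have hUa : {χ ∈ (L a).erase c | ¬ #{v ∈ colorClass g χ | ¬ p v} = 1} ⊆
      colorsUsedNotOnceOn (¬ p ·) g := fun χ hχ => mem_filter.2
    ⟨h.list_subset_image (Or.inl rfl) (mem_of_mem_erase (mem_filter.1 hχ).1), (mem_filter.1 hχ).2⟩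
  have hUb : {χ ∈ (L b).erase c | ¬ #{v ∈ colorClass g χ | p v} = 1} ⊆
      colorsUsedNotOnceOn p g := fun χ hχ => mem_filter.2
    ⟨h.list_subset_image (Or.inr rfl) (mem_of_mem_erase (mem_filter.1 hχ).1), (mem_filter.1 hχ).2⟩
  have hmult : #{v ∈ holders L c | p v} + #{v ∈ holders L c | ¬ p v} = mult L c :=
    card_filter_add_card_filter_not _
  have hsides : #{v | p v} + #{v | ¬ p v} = Fintype.card V := card_filter_add_card_filter_not _
  have hcount := card_colorsUsedNotOnceOn_add_add_two_mul (p := p)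
    fun χ => (h.isProportionalChoice.2 χ).1
  have hM : 0 < #(mixedColors p g) := card_pos.2 ⟨c, h.mem_mixedColors⟩
  have hc : k < mult L c := (h.isProportionalChoice.2 c).2.1 h.card_colorClass
  have h1 := card_le_card hUa
  have h2 := card_le_card hUb
  -- together: `3k - 1 + 2 #(mixedColors p g) ≤ 2 |V| ≤ 3k + 1`, so every estimate is tight
  have hM1 : #(mixedColors p g) = 1 := by omega
  refine h.false_of_tight hL (by omega) ?_ ?_ ?_
  · exact eq_singleton_iff_unique_mem.2 ⟨h.mem_mixedColors,
      fun χ hχ => card_le_one.1 hM1.le χ hχ c h.mem_mixedColors⟩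
  · rw [← eq_of_subset_of_card_le hUa (by omega)]; exact filter_subset _ _
  · rw [← eq_of_subset_of_card_le hUb (by omega)]; exact filter_subset _ _

end IsStuck

lemma exists_isProportionalChoice_mixedColors_eq_empty (hex : ∃ g, IsProportionalChoice L k g)
    (hstuck : ∀ g c a b, ¬ IsStuck p L k g c a b) :
    ∃ g, IsProportionalChoice L k g ∧ mixedColors p g = ∅ := by
  obtain ⟨g, hg, hmin⟩ := (measure fun g => #(mixedColors p g)).wf.has_min
    {g | IsProportionalChoice L k g} hex
  refine ⟨g, hg, eq_empty_of_forall_notMem fun c hc => ?_⟩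
  obtain ⟨⟨a, ha, hpa⟩, b, hb, hpb⟩ := mem_mixedColors.1 hc
  have hab : a ≠ b := fun e => hpb (e ▸ hpa)
  refine hstuck g c a b ⟨hg, fun g' hg' => not_lt.1 (hmin g' hg'), ?_, hpa, hpb⟩
  refine (eq_of_subset_of_card_le (insert_subset ha (singleton_subset_iff.2 hb)) ?_).symm
  rw [card_pair hab]
  exact (hg.2 c).1

end Stuck

end ProportionalChoice

open ProportionalChoice in
theorem proportionallyChoosable_completeBipartiteGraph {α β : Type*} [Fintype α] [Fintype β]
    {k : ℕ} (hk : 2 ≤ k) (hN : 2 * (Fintype.card α + Fintype.card β) ≤ 3 * k + 1) :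
    ProportionallyChoosable (completeBipartiteGraph α β) k := by
  classical
  intro L hL
  have hN' : 2 * Fintype.card (α ⊕ β) ≤ 3 * k + 1 := by rwa [Fintype.card_sum]
  obtain ⟨g, hg, hmix⟩ := exists_isProportionalChoice_mixedColors_eq_empty (p := (·.isLeft))
    (exists_isProportionalChoice (by omega) (by omega) hL) fun g c a b h => h.false hL hk hN'
  refine ⟨g, hg.isProportionalColoring (by omega) ?_⟩
  rintro u w (⟨hu, hw⟩ | ⟨hu, hw⟩)
  · exact apply_ne_of_mixedColors_eq_empty hmix hu (by simpa using hw)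
  · exact (apply_ne_of_mixedColors_eq_empty hmix hw (by simpa using hu)).symm

/-- For `m ≥ 3d`, `n ≥ 2`, `d ≥ 1`, `K_{n,m}` is proportionally
`(m+n-d-1)`-choosable, hence `χ_pc(K_{n,m}) ≤ m+n-d-1`. -/
theorem stmt12 (m n d : ℕ) (hd : 1 ≤ d) (hm : 3 * d ≤ m) (hn : 2 ≤ n) :
    ProportionallyChoosable (KBip n m) (m + n - d - 1) ∧
      propChoiceNumber (KBip n m) ≤ m + n - d - 1 := by
  have h : ProportionallyChoosable (KBip n m) (m + n - d - 1) :=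
    proportionallyChoosable_completeBipartiteGraph (by omega)
      (by simp only [Fintype.card_fin]; omega)
  exact ⟨h, Nat.sInf_le h⟩
end
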